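/- arXiv:1910.10629 — 9 statements merged into one kernel-verified Lean document; each statement's English description precedes it below -/
import Mathlib

section
/- Assume the P-ideal dichotomy (PID). Then for every Fréchet α₁ topological space X, the tightness of the Gδ-modification satisfies t(X_δ) ≤ ω₁. -/
open Set Filter Topology

universe u v

noncomputable section

/-- The Gδ-modification of a topology: the topology generated by the Gδ subsets. -/
def gdeltaMod {X : Type*} (t : TopologicalSpace X) : TopologicalSpace X :=
  TopologicalSpace.generateFrom {s : Set X | @IsGδ X t s}

/-- `x` is a Fréchet point: whenever `x ∈ cl A` there is a sequence in `A` converging to `x`. -/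
def IsFrechetPt {X : Type*} (t : TopologicalSpace X) (x : X) : Prop :=
  ∀ A : Set X, x ∈ @closure X t A →
    ∃ u : ℕ → X, (∀ n, u n ∈ A) ∧ @Filter.Tendsto ℕ X u Filter.atTop (@nhds X t x)

/-- `x` is an α₁-point: given countably many sequences converging to `x`, there is a single
sequence converging to `x` whose range contains the range of each given one modulo finite. -/
def IsAlpha1Pt {X : Type*} (t : TopologicalSpace X) (x : X) : Prop :=
  ∀ u : ℕ → ℕ → X, (∀ n, @Filter.Tendsto ℕ X (u n) Filter.atTop (@nhds X t x)) →
    ∃ v : ℕ → X, @Filter.Tendsto ℕ X v Filter.atTop (@nhds X t x) ∧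
      ∀ n, (Set.range (u n) \ Set.range v).Finite

/-- A set `B` converges to `x`: every neighborhood of `x` contains all but finitely
many elements of `B`. -/
def SetConverges {X : Type*} (t : TopologicalSpace X) (B : Set X) (x : X) : Prop :=
  ∀ U ∈ @nhds X t x, (B \ U).Finite

/-- Tightness of the space is at most κ. -/
def tightnessLe (X : Type u) (t : TopologicalSpace X) (κ : Cardinal.{u}) : Prop :=
  ∀ (x : X) (A : Set X), x ∈ @closure X t A →
    ∃ B : Set X, B ⊆ A ∧ Cardinal.mk ↥B ≤ κ ∧ x ∈ @closure X t B

/-- The tightness `t(X)`: the least infinite cardinal κ such that whenever `x ∈ cl A`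
there is `B ⊆ A` with `|B| ≤ κ` and `x ∈ cl B`. -/
def tightness (X : Type u) (t : TopologicalSpace X) : Cardinal.{u} :=
  sInf {κ : Cardinal.{u} | Cardinal.aleph0 ≤ κ ∧ tightnessLe X t κ}

/-- The tightness `t(x, X)` of a point. -/
def tightnessPt {X : Type u} (t : TopologicalSpace X) (x : X) : Cardinal.{u} :=
  sInf {κ : Cardinal.{u} | Cardinal.aleph0 ≤ κ ∧
    ∀ A : Set X, x ∈ @closure X t A →
      ∃ B : Set X, B ⊆ A ∧ Cardinal.mk ↥B ≤ κ ∧ x ∈ @closure X t B}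
/-- `I` is a P-ideal on the set (type) `S`: an ideal of countable subsets of `S` containing
all finite sets, such that every countable subfamily has a pseudo-union in the ideal. -/
def IsPIdeal {S : Type u} (I : Set (Set S)) : Prop :=
  (∀ A ∈ I, A.Countable) ∧
  (∀ A ∈ I, ∀ B : Set S, B ⊆ A → B ∈ I) ∧
  (∀ A ∈ I, ∀ B ∈ I, A ∪ B ∈ I) ∧
  (∀ A : Set S, A.Finite → A ∈ I) ∧
  (∀ A : ℕ → Set S, (∀ n, A n ∈ I) → ∃ B ∈ I, ∀ n, (A n \ B).Finite)

/-- The P-ideal dichotomy: for every P-ideal `I` on a set `S`, either there is an uncountable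
`Y ⊆ S` all of whose countable subsets lie in `I`, or `S` is a countable union of sets
each containing no infinite member of `I`. -/
def PIdealDichotomy : Prop :=
  ∀ (S : Type u) (I : Set (Set S)), IsPIdeal I →
    (∃ Y : Set S, ¬ Y.Countable ∧ ∀ Z : Set S, Z ⊆ Y → Z.Countable → Z ∈ I) ∨
    (∃ Y : ℕ → Set S, (⋃ n, Y n) = Set.univ ∧
      ∀ n, ∀ Z ∈ I, Z.Infinite → ¬ Z ⊆ Y n)


section Aux

variable {X : Type u} {t : TopologicalSpace X} {x : X}

theorem mem_closure_iff' {X : Type v} (t' : TopologicalSpace X) (s : Set X) (x : X) :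
    x ∈ @closure X t' s ↔ ∀ O, @IsOpen X t' O → x ∈ O → (O ∩ s).Nonempty := by
  letI := t'; exact mem_closure_iff

/-- Pigeonhole: a sequence with finite range has an infinite fiber. -/
theorem exists_inf_fiber {α : Type v} (f : ℕ → α) (h : (Set.range f).Finite) :
    ∃ z, {k | f k = z}.Infinite := by
  have := h.to_subtype
  set g : ℕ → Set.range f := fun k => ⟨f k, Set.mem_range_self k⟩ with hg
  obtain ⟨⟨z, hz⟩, hfib⟩ := Finite.exists_infinite_fiber g
  rw [Set.infinite_coe_iff] at hfib
  refine ⟨z, hfib.mono ?_⟩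
  intro k hk
  simpa [hg, Subtype.ext_iff] using hk

/-- Every open set of the Gδ-modification containing `x` contains a Gδ set containing `x`. -/
theorem gdelta_basis {O : Set X} (hO : TopologicalSpace.GenerateOpen {s : Set X | @IsGδ X t s} O)
    (hx : x ∈ O) : ∃ G, @IsGδ X t G ∧ x ∈ G ∧ G ⊆ O := by
  induction hO with
  | basic s hs => exact ⟨s, hs, hx, subset_rfl⟩
  | univ => exact ⟨Set.univ, @IsGδ.univ X t, trivial, subset_rfl⟩
  | inter s u _ _ ihs ihu =>
    obtain ⟨G1, hG1, hxG1, hG1s⟩ := ihs hx.1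
    obtain ⟨G2, hG2, hxG2, hG2u⟩ := ihu hx.2
    exact ⟨G1 ∩ G2, hG1.inter hG2, ⟨hxG1, hxG2⟩, Set.inter_subset_inter hG1s hG2u⟩
  | sUnion S _ ih =>
    obtain ⟨s, hsS, hxs⟩ := hx
    obtain ⟨G, hG, hxG, hGs⟩ := ih s hsS hxs
    exact ⟨G, hG, hxG, hGs.trans (Set.subset_sUnion_of_mem hsS)⟩

/-- The range of a convergent sequence set-converges. -/
theorem setConverges_range {v : ℕ → X} (hv : @Filter.Tendsto ℕ X v Filter.atTop (@nhds X t x)) :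
    SetConverges t (Set.range v) x := by
  intro U hU
  have hpre : {k | v k ∉ U}.Finite := by
    have := hv hU
    rw [Filter.mem_map, Filter.mem_atTop_sets] at this
    obtain ⟨N, hN⟩ := this
    exact (Set.finite_Iio N).subset fun k hk => by
      by_contra hc
      exact hk (hN k (le_of_not_gt hc))
  refine (hpre.image v).subset ?_
  rintro y ⟨⟨k, rfl⟩, hyU⟩
  exact ⟨k, hyU, rfl⟩

theorem setConverges_mono {B C : Set X} (h : B ⊆ C) (hC : SetConverges t C x) :
    SetConverges t B x := fun U hU => (hC U hU).subset (Set.diff_subset_diff_left h)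

/-- An infinite countable set-convergent set is the range of an injective convergent sequence. -/
theorem setConverges_enum {s : Set X} (hc : s.Countable) (hinf : s.Infinite)
    (hs : SetConverges t s x) :
    ∃ u : ℕ → X, Set.range u = s ∧ @Filter.Tendsto ℕ X u Filter.atTop (@nhds X t x) := by
  have hden : Nonempty (Denumerable ↥s) :=
    nonempty_denumerable_iff.mpr ⟨hc.to_subtype, hinf.to_subtype⟩
  obtain ⟨d⟩ := hden
  let e : ↥s ≃ ℕ := Denumerable.eqv ↥s
  refine ⟨fun k => (e.symm k : X), ?_, ?_⟩
  · ext y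
    constructor
    · rintro ⟨k, rfl⟩; exact (e.symm k).2
    · intro hy; exact ⟨e ⟨y, hy⟩, by simp⟩
  · rw [← Nat.cofinite_eq_atTop]
    intro U hU
    rw [Filter.mem_map]
    have h1 : {k | ((e.symm k : X)) ∉ U}.Finite := by
      have h2 : (Subtype.val ⁻¹' (s \ U) : Set ↥s).Finite :=
        Set.Finite.preimage (Subtype.val_injective.injOn) (hs U hU)
      have h3 : ((fun k => e.symm k) ⁻¹' (Subtype.val ⁻¹' (s \ U)) : Set ℕ).Finite :=
        Set.Finite.preimage (e.symm.injective.injOn) h2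
      refine h3.subset fun k hk => ?_
      exact ⟨(e.symm k).2, hk⟩
    rw [Filter.mem_cofinite]
    exact h1

/-- If `z` belongs to every `t`-neighborhood of `x`, then `x` is in the Gδ-closure of `{z}`. -/
theorem mem_gdelta_closure_singleton {z : X} (hz : ∀ U ∈ @nhds X t x, z ∈ U) :
    x ∈ @closure X (gdeltaMod t) {z} := by
  rw [mem_closure_iff' (gdeltaMod t)]
  intro O hO hxO
  obtain ⟨G, hG, hxG, hGO⟩ := gdelta_basis (t := t) hO hxO
  obtain ⟨T, hTopen, -, rfl⟩ := hG
  refine ⟨z, hGO ?_, rfl⟩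
  intro U hU
  exact hz U (((hTopen U hU).mem_nhds (hxG U hU)))

theorem uncountable_aleph_one_le {α : Type u} {s : Set α} (h : ¬ s.Countable) :
    Cardinal.aleph 1 ≤ Cardinal.mk s := by
  rw [← Cardinal.succ_aleph0]
  refine Order.succ_le_of_lt ?_
  rw [Cardinal.aleph0_lt_mk_iff]
  rw [← Set.countable_coe_iff] at h
  exact ⟨h⟩

end Aux

section Main

variable {X : Type u} (t : TopologicalSpace X) (x : X) (A : Set X)

/-- The ideal of countable subsets of `A` converging to `x`. -/
def convIdeal : Set (Set ↥A) :=
  {B | B.Countable ∧ SetConverges t (Subtype.val '' B) x}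

theorem convIdeal_isPIdeal (hAlpha1 : IsAlpha1Pt t x) : IsPIdeal (convIdeal t x A) := by
  classical
  refine ⟨fun B hB => hB.1, ?_, ?_, ?_, ?_⟩
  · rintro B ⟨hBc, hBconv⟩ C hCB
    exact ⟨hBc.mono hCB, setConverges_mono (Set.image_mono hCB) hBconv⟩
  · rintro B ⟨hBc, hBconv⟩ C ⟨hCc, hCconv⟩
    refine ⟨hBc.union hCc, fun U hU => ?_⟩
    rw [Set.image_union]
    rw [Set.union_diff_distrib]
    exact (hBconv U hU).union (hCconv U hU)
  · intro B hB
    exact ⟨hB.countable, fun U hU => ((hB.image _).diff)⟩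
  · intro F hF
    by_cases hex : ∀ n, ¬ (Subtype.val '' F n : Set X).Infinite
    · refine ⟨∅, ⟨Set.countable_empty, fun U hU => Set.Finite.subset Set.finite_empty (by simp)⟩, fun n => ?_⟩
      have : (Subtype.val '' F n : Set X).Finite := Set.not_infinite.mp (hex n)
      exact ((this.of_finite_image (Subtype.val_injective.injOn)).diff)
    · push_neg at hex
      have hchoice : ∀ n, ∃ u : ℕ → X,
          (Set.range u ⊇ Subtype.val '' F n ∨ ¬ (Subtype.val '' F n : Set X).Infinite) ∧
          @Filter.Tendsto ℕ X u Filter.atTop (@nhds X t x) := by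
        intro n
        by_cases hn : (Subtype.val '' F n : Set X).Infinite
        · obtain ⟨u, hur, hut⟩ := setConverges_enum ((hF n).1.image _) hn (hF n).2
          exact ⟨u, Or.inl (hur ▸ subset_rfl), hut⟩
        · exact ⟨fun _ => x, Or.inr hn, tendsto_const_nhds⟩
      choose u hu hut using hchoice
      obtain ⟨v, hvt, hvfin⟩ := hAlpha1 u hut
      refine ⟨{a : ↥A | (a : X) ∈ Set.range v}, ⟨?_, ?_⟩, ?_⟩
      · exact (Set.countable_range v).preimage Subtype.val_injective
      · refine setConverges_mono ?_ (setConverges_range hvt)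
        rintro y ⟨a, ha, rfl⟩; exact ha
      · intro n
        by_cases hn : (Subtype.val '' F n : Set X).Infinite
        · have hsub : Subtype.val '' (F n \ {a : ↥A | (a : X) ∈ Set.range v})
              ⊆ Set.range (u n) \ Set.range v := by
            rintro y ⟨a, ⟨haF, haB⟩, rfl⟩
            refine ⟨?_, haB⟩
            rcases hu n with h | h
            · exact h ⟨a, haF, rfl⟩
            · exact absurd hn h
          have := (hvfin n).subset hsub
          exact this.of_finite_image (Subtype.val_injective.injOn)
        · have : (Subtype.val '' F n : Set X).Finite := Set.not_infinite.mp hn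
          exact ((this.of_finite_image (Subtype.val_injective.injOn)).diff)

theorem tightnessLe_gdeltaMod (hPID : PIdealDichotomy.{u})
    (hFrechet : ∀ x : X, IsFrechetPt t x) (hAlpha1 : ∀ x : X, IsAlpha1Pt t x) :
    tightnessLe X (gdeltaMod t) (Cardinal.aleph 1) := by
  classical
  intro x A hxA
  rcases hPID ↥A (convIdeal t x A) (convIdeal_isPIdeal t x A (hAlpha1 x)) with
    ⟨Y, hYc, hYI⟩ | ⟨Yn, hcov, hno⟩
  · -- Case 1: uncountable set all of whose countable subsets converge
    obtain ⟨Y', hY'Y, hY'card⟩ :=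
      Cardinal.le_mk_iff_exists_subset.mp (uncountable_aleph_one_le hYc)
    refine ⟨Subtype.val '' Y', Subtype.coe_image_subset _ _, ?_, ?_⟩
    · rw [Cardinal.mk_image_eq Subtype.val_injective, hY'card]
    · rw [mem_closure_iff' (gdeltaMod t)]
      intro O hO hxO
      obtain ⟨G, hG, hxG, hGO⟩ := gdelta_basis (t := t) hO hxO
      obtain ⟨T, hTopen, hTc, rfl⟩ := hG
      by_contra hempty
      rw [Set.not_nonempty_iff_eq_empty] at hempty
      -- every element of Y' avoids some U ∈ T
      have havoid : ∀ a ∈ Y', ∃ U ∈ T, (a : X) ∉ U := by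
        intro a ha
        by_contra hc
        push_neg at hc
        have : (a : X) ∈ O ∩ Subtype.val '' Y' :=
          ⟨hGO (fun U hU => hc U hU), ⟨a, ha, rfl⟩⟩
        rw [hempty] at this
        exact this
      have hY'unc : ¬ Y'.Countable := by
        intro hc
        have : Cardinal.mk ↥Y' ≤ Cardinal.aleph0 := Cardinal.mk_le_aleph0_iff.mpr hc.to_subtype
        rw [hY'card] at this
        exact absurd this (not_le.mpr (by
          have := Cardinal.aleph0_lt_aleph_one
          exact this))
      have hcover : Y' ⊆ ⋃ U ∈ T, {a ∈ Y' | (a : X) ∉ U} := by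
        intro a ha
        obtain ⟨U, hUT, hU⟩ := havoid a ha
        exact Set.mem_biUnion hUT ⟨ha, hU⟩
      have hbig : ∃ U ∈ T, ¬ {a ∈ Y' | (a : X) ∉ U}.Countable := by
        by_contra hc
        push_neg at hc
        exact hY'unc ((hTc.biUnion hc).mono hcover)
      obtain ⟨U, hUT, hZunc⟩ := hbig
      set Z := {a ∈ Y' | (a : X) ∉ U} with hZ
      have hZinf : Z.Infinite := fun hfin => hZunc hfin.countable
      let f := hZinf.natEmbedding
      set W : Set ↥A := Set.range (fun k => (f k : ↥A)) with hW
      have hWY : W ⊆ Y := by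
        rintro a ⟨k, rfl⟩
        exact hY'Y ((f k).2.1)
      have hWI := hYI W hWY (Set.countable_range _)
      have hWinf0 : W.Infinite :=
        Set.infinite_range_of_injective (fun a b hab => f.injective (Subtype.ext hab))
      have hWinf : (Subtype.val '' W : Set X).Infinite :=
        hWinf0.image (Subtype.val_injective.injOn)
      have hUnhds : U ∈ @nhds X t x := (hTopen U hUT).mem_nhds (hxG U hUT)
      have := hWI.2 U hUnhds
      refine hWinf ?_
      refine this.subset fun y hy => ⟨hy, ?_⟩
      obtain ⟨a, ⟨k, rfl⟩, rfl⟩ := hy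
      exact (f k).2.2
  · -- Case 2: A is covered by sets with no infinite convergent subset
    by_cases hcl : ∃ n, x ∈ @closure X t (Subtype.val '' Yn n)
    · obtain ⟨n, hn⟩ := hcl
      obtain ⟨u, humem, hut⟩ := hFrechet x _ hn
      set Z : Set ↥A := {a | a ∈ Yn n ∧ (a : X) ∈ Set.range u} with hZdef
      have hZI : Z ∈ convIdeal t x A := by
        refine ⟨?_, ?_⟩
        · exact ((Set.countable_range u).preimage Subtype.val_injective).mono
            (fun a ha => ha.2)
        · refine setConverges_mono ?_ (setConverges_range hut)
          rintro y ⟨a, ha, rfl⟩; exact ha.2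
      have hZfin : Z.Finite := by
        by_contra hinf
        exact hno n Z hZI hinf (fun a ha => ha.1)
      have hrange : Set.range u ⊆ Subtype.val '' Z := by
        rintro y ⟨k, rfl⟩
        obtain ⟨a, haY, hay⟩ := humem k
        exact ⟨a, ⟨haY, hay ▸ ⟨k, rfl⟩⟩, hay⟩
      have hrfin : (Set.range u).Finite := (hZfin.image _).subset hrange
      obtain ⟨z, hzfib⟩ := exists_inf_fiber u hrfin
      have hzA : z ∈ A := by
        obtain ⟨k, hk⟩ := hzfib.nonempty
        obtain ⟨a, -, hay⟩ := humem k
        rw [← hk]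
        rw [← hay]
        exact a.2
      refine ⟨{z}, Set.singleton_subset_iff.mpr hzA, ?_, ?_⟩
      · rw [Cardinal.mk_singleton]
        exact le_trans Cardinal.one_le_aleph0 (Cardinal.aleph0_le_aleph 1)
      · refine mem_gdelta_closure_singleton (fun U hU => ?_)
        have := hut hU
        rw [Filter.mem_map, Filter.mem_atTop_sets] at this
        obtain ⟨N, hN⟩ := this
        obtain ⟨k, hkfib, hkN⟩ := hzfib.exists_gt N
        exact hkfib ▸ hN k (le_of_lt hkN)
    · push_neg at hcl
      exfalso
      have hchoice : ∀ n, ∃ U : Set X, @IsOpen X t U ∧ x ∈ U ∧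
          U ∩ Subtype.val '' Yn n = ∅ := by
        intro n
        have := hcl n
        rw [mem_closure_iff' t] at this
        push_neg at this
        obtain ⟨U, hUopen, hxU, hUdisj⟩ := this
        exact ⟨U, hUopen, hxU, hUdisj⟩
      choose U hUopen hxU hUdisj using hchoice
      have hG : @IsGδ X t (⋂ n, U n) := IsGδ.iInter_of_isOpen hUopen
      have hGopen : @IsOpen X (gdeltaMod t) (⋂ n, U n) :=
        TopologicalSpace.isOpen_generateFrom_of_mem hG
      rw [mem_closure_iff' (gdeltaMod t)] at hxA
      obtain ⟨y, hyG, hyA⟩ := hxA _ hGopen (Set.mem_iInter.mpr hxU)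
      have : (⟨y, hyA⟩ : ↥A) ∈ ⋃ n, Yn n := hcov ▸ Set.mem_univ _
      obtain ⟨n, hyn⟩ := Set.mem_iUnion.mp this
      have : y ∈ U n ∩ Subtype.val '' Yn n :=
        ⟨Set.mem_iInter.mp hyG n, ⟨⟨y, hyA⟩, hyn, rfl⟩⟩
      rw [hUdisj n] at this
      exact this

end Main

/-- PID implies that for every Fréchet α₁-space `X`,
the tightness of the Gδ-modification is at most `ω₁`. -/
theorem statement0 (hPID : PIdealDichotomy.{u}) (X : Type u) (t : TopologicalSpace X)
    (hFrechet : ∀ x : X, IsFrechetPt t x) (hAlpha1 : ∀ x : X, IsAlpha1Pt t x) :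
    tightness X (gdeltaMod t) ≤ Cardinal.aleph 1 := by
  have hle : tightnessLe X (gdeltaMod t) (Cardinal.aleph 1) :=
    tightnessLe_gdeltaMod t hPID hFrechet hAlpha1
  exact csInf_le (OrderBot.bddBelow _) ⟨Cardinal.aleph0_le_aleph 1, hle⟩
end
end

section
/- Let X be a topological space, let x ∈ X be a Fréchet point, and suppose A = ⋃_{n<ω} A_n with x ∉ A, where for each n no sequence of elements of A_n converges to x. Then x does not belong to the closure of A in the Gδ-modification X_δ. -/
open Set Filter Topology

universe u v

noncomputable section

private lemma gdelta_aux {X : Type u} [tt : TopologicalSpace X] {x : X} {A : ℕ → Set X}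
    (hcl : ∀ n, x ∉ closure (A n)) : x ∉ @closure X (gdeltaMod tt) (⋃ n, A n) := by
  set G : Set X := ⋂ n, (closure (A n))ᶜ with hG
  have hGδ : IsGδ G := IsGδ.iInter fun n => isClosed_closure.isOpen_compl.isGδ
  have hopen : IsOpen[gdeltaMod tt] G :=
    TopologicalSpace.isOpen_generateFrom_of_mem hGδ
  have hxG : x ∈ G := mem_iInter.2 fun n => hcl n
  have hdisj : (⋃ n, A n) ⊆ Gᶜ := by
    intro y hy hyG
    obtain ⟨n, hyn⟩ := mem_iUnion.1 hy
    exact (mem_iInter.1 hyG n) (subset_closure hyn)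
  intro hmem
  letI := gdeltaMod tt
  exact (closure_minimal hdisj hopen.isClosed_compl hmem) hxG

/-- if `x` is a Fréchet point, `A = ⋃ₙ Aₙ` with `x ∉ A`, and for each `n` no
sequence of elements of `Aₙ` converges to `x`, then `x` is not in the Gδ-closure of `A`. -/
theorem statement3 (X : Type u) (t : TopologicalSpace X) (x : X)
    (hFrechet : IsFrechetPt t x) (A : ℕ → Set X) (hx : x ∉ ⋃ n, A n)
    (h : ∀ n, ¬ ∃ u : ℕ → X, (∀ k, u k ∈ A n) ∧
      @Filter.Tendsto ℕ X u Filter.atTop (@nhds X t x)) :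
    x ∉ @closure X (gdeltaMod t) (⋃ n, A n) := by
  letI := t
  exact gdelta_aux fun n hxc => h n (hFrechet _ hxc)
end
end

section
/- Let κ be a regular uncountable cardinal, let ⟨C_α : α < κ⟩ be a coherent C-sequence with associated function ρ₂, and let X_ρ be the associated topology on κ+1. Then an infinite countable set A ⊆ κ converges to the point κ in X_ρ (i.e., every neighborhood of κ contains all but finitely many elements of A) if and only if for every limit ordinal α < κ the map ξ ↦ ρ₂(ξ,α) is finite-to-one on A ∩ α. -/
open Set Filter Topology

universe u v

noncomputable section

/-- `β` is a limit (accumulation) point of the set of ordinals `C`. -/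
def IsAccPoint (β : Ordinal.{u}) (C : Set Ordinal.{u}) : Prop :=
  β ≠ 0 ∧ ∀ γ < β, ∃ δ ∈ C, γ < δ ∧ δ < β

/-- `C` is club in `α`: a subset of `α`, closed under limit points below `α`,
and unbounded in `α`. -/
def IsClubIn (C : Set Ordinal.{u}) (α : Ordinal.{u}) : Prop :=
  C ⊆ Set.Iio α ∧ (∀ β < α, IsAccPoint β C → β ∈ C) ∧ ∀ γ < α, ∃ δ ∈ C, γ < δ

/-- A coherent C-sequence on `o`. -/
def IsCoherentCSeq (o : Ordinal.{u}) (C : Ordinal.{u} → Set Ordinal.{u}) : Prop :=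
  (∀ α < o, Order.IsSuccLimit α → IsClubIn (C α) α) ∧
  (∀ α : Ordinal.{u}, α + 1 < o → C (α + 1) = {α}) ∧
  (∀ α < o, ∀ β : Ordinal.{u}, IsAccPoint β (C α) → C α ∩ Set.Iio β = C β)

/-- A `□(o)`-sequence: a coherent C-sequence on `o` with no thread. -/
def IsSquareSeq (o : Ordinal.{u}) (C : Ordinal.{u} → Set Ordinal.{u}) : Prop :=
  IsCoherentCSeq o C ∧
  ¬ ∃ D : Set Ordinal.{u}, IsClubIn D o ∧
      ∀ β : Ordinal.{u}, IsAccPoint β D → D ∩ Set.Iio β = C β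

/-- The basic neighborhood of the top point of `o + 1` determined by an assignment
`n` of natural numbers to (limit) ordinals: `{o} ∪ ⋃ {ξ < α : ρ(ξ,α) > n α}`. -/
def sqBase (o : Ordinal.{u}) (ρ : Ordinal.{u} → Ordinal.{u} → ℕ) (n : Ordinal.{u} → ℕ) :
    Set {β : Ordinal.{u} // β ≤ o} :=
  {x | x.1 = o ∨ ∃ α : Ordinal.{u}, α < o ∧ Order.IsSuccLimit α ∧ x.1 < α ∧ n α < ρ x.1 α}

/-- The topology `X_ρ` on `o + 1` (as the subtype of ordinals `≤ o`): every point below `o`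
is isolated and the neighborhoods of the top point are generated by the sets `sqBase o ρ n`. -/
def sqTop (o : Ordinal.{u}) (ρ : Ordinal.{u} → Ordinal.{u} → ℕ) :
    TopologicalSpace {β : Ordinal.{u} // β ≤ o} :=
  nhdsAdjoint ⟨o, le_rfl⟩
    (⨅ n : Ordinal.{u} → ℕ, Filter.principal (sqBase o ρ n))

namespace Statement5Aux

/-- Enumerate the least elements of an infinite set of ordinals in increasing order. -/
noncomputable def minEnum (V : Set Ordinal.{u}) : ℕ → Ordinal.{u}
  | 0 => sInf V
  | n + 1 => sInf (V ∩ Set.Ioi (minEnum V n))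

lemma minEnum_spec {V : Set Ordinal.{u}} (hV : V.Infinite) (n : ℕ) :
    minEnum V n ∈ V ∧ (V ∩ Set.Iic (minEnum V n)).Finite := by
  induction n with
  | zero =>
    refine ⟨csInf_mem hV.nonempty, ?_⟩
    have hsub : V ∩ Set.Iic (minEnum V 0) ⊆ {sInf V} := by
      rintro x ⟨hxV, hx⟩
      exact le_antisymm hx (csInf_le' hxV)
    exact (Set.finite_singleton _).subset hsub
  | succ n ih =>
    obtain ⟨hmem, hfin⟩ := ih
    have hne : (V ∩ Set.Ioi (minEnum V n)).Nonempty := by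
      by_contra h
      rw [Set.not_nonempty_iff_eq_empty] at h
      apply hV
      refine hfin.subset fun x hx => ⟨hx, Set.mem_Iic.2 (le_of_not_gt fun hlt => ?_)⟩
      exact Set.eq_empty_iff_forall_notMem.1 h x ⟨hx, Set.mem_Ioi.2 hlt⟩
    have hmem' : minEnum V (n + 1) ∈ V ∩ Set.Ioi (minEnum V n) := csInf_mem hne
    refine ⟨hmem'.1, ?_⟩
    have hsub : V ∩ Set.Iic (minEnum V (n + 1)) ⊆
        (V ∩ Set.Iic (minEnum V n)) ∪ {minEnum V (n + 1)} := by
      rintro x ⟨hxV, hx⟩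
      rcases le_or_gt x (minEnum V n) with h | h
      · exact Or.inl ⟨hxV, h⟩
      · exact Or.inr (le_antisymm hx (csInf_le' ⟨hxV, h⟩))
    exact ((hfin.union (Set.finite_singleton _)).subset hsub)

lemma minEnum_nonempty {V : Set Ordinal.{u}} (hV : V.Infinite) (n : ℕ) :
    (V ∩ Set.Ioi (minEnum V n)).Nonempty := by
  obtain ⟨-, hfin⟩ := minEnum_spec hV n
  by_contra h
  rw [Set.not_nonempty_iff_eq_empty] at h
  apply hV
  refine hfin.subset fun x hx => ⟨hx, Set.mem_Iic.2 (le_of_not_gt fun hlt => ?_)⟩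
  exact Set.eq_empty_iff_forall_notMem.1 h x ⟨hx, Set.mem_Ioi.2 hlt⟩

lemma minEnum_strictMono {V : Set Ordinal.{u}} (hV : V.Infinite) :
    StrictMono (minEnum V) :=
  strictMono_nat_of_lt_succ fun n => (csInf_mem (minEnum_nonempty hV n)).2

lemma evBound {f : ℕ → ℕ} (m N : ℕ) (h : ∀ k ≥ N, f k ≤ m) : ∃ m', ∀ k, f k ≤ m' :=
  ⟨max m ((Finset.range N).sup f), fun k => by
    rcases lt_or_ge k N with hk | hk
    · exact le_max_of_le_right (Finset.le_sup (Finset.mem_range.2 hk))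
    · exact le_max_of_le_left (h k hk)⟩

section Key

variable {o : Ordinal.{u}} {C : Ordinal.{u} → Set Ordinal.{u}}
  {ρ : Ordinal.{u} → Ordinal.{u} → ℕ}

lemma reduce (hC : IsCoherentCSeq o C)
    (hρs : ∀ α β : Ordinal.{u}, α < β → β < o → ρ α β = ρ α (sInf (C β ∩ Set.Ici α)) + 1)
    (g : ℕ → Ordinal.{u}) {δ : Ordinal.{u}}
    (hδ : Order.IsSuccLimit δ) (hgδ : ∀ k, g k < δ)
    (hsup : ∀ γ < δ, ∃ N : ℕ, ∀ k ≥ N, γ < g k)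
    {β : Ordinal.{u}} (hδβ : δ < β) (hβo : β < o) :
    ∃ β', δ ≤ β' ∧ β' < β ∧ ∃ c ≤ 1, ∃ N : ℕ, ∀ k ≥ N, ρ (g k) β = ρ (g k) β' + c := by
  rcases Ordinal.zero_or_succ_or_isSuccLimit β with rfl | ⟨γ, rfl⟩ | hβlim
  · exact absurd hδβ (fun h => not_lt_zero h)
  · -- successor case
    rw [← Ordinal.add_one_eq_succ] at hβo ⊢
    have hδγ : δ ≤ γ := Order.lt_succ_iff.1 hδβ
    have hγβ : γ < γ + 1 := by rw [Ordinal.add_one_eq_succ]; exact Order.lt_succ γ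
    refine ⟨γ, hδγ, hγβ, 1, le_refl 1, 0, fun k _ => ?_⟩
    have hgk : g k < γ + 1 := (hgδ k).trans (lt_of_le_of_lt hδγ hγβ)
    have hCs : C (γ + 1) = {γ} := hC.2.1 γ hβo
    have hint : C (γ + 1) ∩ Set.Ici (g k) = {γ} := by
      rw [hCs]
      exact Set.inter_eq_self_of_subset_left
        (Set.singleton_subset_iff.2 (le_of_lt ((hgδ k).trans_le hδγ)))
    rw [hρs (g k) (γ + 1) hgk hβo, hint, csInf_singleton]
  · -- limit case
    by_cases hacc : IsAccPoint δ (C β)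
    · have hcoh : C β ∩ Set.Iio δ = C δ := hC.2.2 β hβo δ hacc
      have hδo : δ < o := hδβ.trans hβo
      refine ⟨δ, le_refl δ, hδβ, 0, Nat.zero_le 1, 0, fun k _ => ?_⟩
      have hx : g k < δ := hgδ k
      have hδclub := hC.1 δ hδo hδ
      obtain ⟨d, hd, hxd⟩ := hδclub.2.2 (g k) hx
      have hdβ : d ∈ C β := by
        have hd' : d ∈ C β ∩ Set.Iio δ := by rw [hcoh]; exact hd
        exact hd'.1
      have hdδ : d < δ := hδclub.1 hd
      have hne1 : (C β ∩ Set.Ici (g k)).Nonempty := ⟨d, hdβ, hxd.le⟩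
      have hne2 : (C δ ∩ Set.Ici (g k)).Nonempty := ⟨d, hd, hxd.le⟩
      have hs1 := csInf_mem hne1
      have hkey : sInf (C β ∩ Set.Ici (g k)) = sInf (C δ ∩ Set.Ici (g k)) := by
        apply le_antisymm
        · refine le_csInf hne2 fun t ht => ?_
          have htβ : t ∈ C β := by
            have : t ∈ C β ∩ Set.Iio δ := by rw [hcoh]; exact ht.1
            exact this.1
          exact csInf_le' ⟨htβ, ht.2⟩
        · have hlt : sInf (C β ∩ Set.Ici (g k)) < δ :=
            lt_of_le_of_lt (csInf_le' (⟨hdβ, hxd.le⟩ : d ∈ C β ∩ Set.Ici (g k))) hdδ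
          have hsδ : sInf (C β ∩ Set.Ici (g k)) ∈ C δ := by
            rw [← hcoh]; exact ⟨hs1.1, hlt⟩
          exact csInf_le' ⟨hsδ, hs1.2⟩
      rw [hρs (g k) β (hx.trans hδβ) hβo, hρs (g k) δ hx hδo, hkey]
    · have h2 : ∃ γ₀, γ₀ < δ ∧ ∀ t ∈ C β, ¬(γ₀ < t ∧ t < δ) := by
        by_contra h
        push_neg at h
        refine hacc ⟨hδ.pos.ne', fun γ hγ => ?_⟩
        obtain ⟨t, ht, h1, h2⟩ := h γ hγ
        exact ⟨t, ht, h1, h2⟩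
      obtain ⟨γ₀, hγ₀δ, hγ₀⟩ := h2
      have hβclub := hC.1 β hβo hβlim
      obtain ⟨d, hd, hδd⟩ := hβclub.2.2 δ hδβ
      have hne : (C β ∩ Set.Ici δ).Nonempty := ⟨d, hd, hδd.le⟩
      have hβ'mem : sInf (C β ∩ Set.Ici δ) ∈ C β ∩ Set.Ici δ := csInf_mem hne
      set β' := sInf (C β ∩ Set.Ici δ) with hβ'def
      have hδβ' : δ ≤ β' := hβ'mem.2
      have hβ'β : β' < β := hβclub.1 hβ'mem.1
      obtain ⟨N, hN⟩ := hsup γ₀ hγ₀δ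
      refine ⟨β', hδβ', hβ'β, 1, le_refl 1, N, fun k hk => ?_⟩
      have hγk : γ₀ < g k := hN k hk
      have hβ'mem2 : β' ∈ C β ∩ Set.Ici (g k) := ⟨hβ'mem.1, (hgδ k).le.trans hδβ'⟩
      have hkey : sInf (C β ∩ Set.Ici (g k)) = β' := by
        apply le_antisymm
        · exact csInf_le' hβ'mem2
        · refine le_csInf ⟨β', hβ'mem2⟩ fun t ht => ?_
          rcases lt_or_ge t δ with h | h
          · exact absurd ⟨hγk.trans_le ht.2, h⟩ (hγ₀ t ht.1)
          · exact csInf_le' ⟨ht.1, h⟩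
      rw [hρs (g k) β ((hgδ k).trans hδβ) hβo, hkey]

lemma key_down (hC : IsCoherentCSeq o C)
    (hρs : ∀ α β : Ordinal.{u}, α < β → β < o → ρ α β = ρ α (sInf (C β ∩ Set.Ici α)) + 1)
    (g : ℕ → Ordinal.{u}) {δ : Ordinal.{u}}
    (hδ : Order.IsSuccLimit δ) (hgδ : ∀ k, g k < δ)
    (hsup : ∀ γ < δ, ∃ N : ℕ, ∀ k ≥ N, γ < g k) :
    ∀ β : Ordinal.{u}, δ ≤ β → β < o →
      (∃ m N : ℕ, ∀ k ≥ N, ρ (g k) β ≤ m) → ∃ m N : ℕ, ∀ k ≥ N, ρ (g k) δ ≤ m := by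
  intro β
  induction β using Ordinal.induction with
  | h β IH =>
    intro hδβ hβo hb
    rcases eq_or_lt_of_le hδβ with rfl | hlt
    · exact hb
    obtain ⟨β', hδβ', hβ'β, c, hc, N, hred⟩ := reduce hC hρs g hδ hgδ hsup hlt hβo
    obtain ⟨m, N₀, hm⟩ := hb
    refine IH β' hβ'β hδβ' (hβ'β.trans hβo) ⟨m, max N N₀, fun k hk => ?_⟩
    have h1 := hred k (le_trans (le_max_left _ _) hk)
    have h2 := hm k (le_trans (le_max_right _ _) hk)
    omega

lemma key_up (hC : IsCoherentCSeq o C)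
    (hρs : ∀ α β : Ordinal.{u}, α < β → β < o → ρ α β = ρ α (sInf (C β ∩ Set.Ici α)) + 1)
    (g : ℕ → Ordinal.{u}) {δ : Ordinal.{u}}
    (hδ : Order.IsSuccLimit δ) (hgδ : ∀ k, g k < δ)
    (hsup : ∀ γ < δ, ∃ N : ℕ, ∀ k ≥ N, γ < g k) :
    ∀ β : Ordinal.{u}, δ ≤ β → β < o →
      (∃ m : ℕ, ∀ k, ρ (g k) δ ≤ m) → ∃ m : ℕ, ∀ k, ρ (g k) β ≤ m := by
  intro β
  induction β using Ordinal.induction with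
  | h β IH =>
    intro hδβ hβo hb
    rcases eq_or_lt_of_le hδβ with rfl | hlt
    · exact hb
    obtain ⟨β', hδβ', hβ'β, c, hc, N, hred⟩ := reduce hC hρs g hδ hgδ hsup hlt hβo
    obtain ⟨m, hm⟩ := IH β' hβ'β hδβ' (hβ'β.trans hβo) hb
    refine evBound (m + 1) N fun k hk => ?_
    rw [hred k hk]
    have := hm k
    omega

end Key

end Statement5Aux

/-- for a coherent C-sequence on a regular uncountable `κ` with associated
`ρ₂`, an infinite countable subset `A` of `κ` converges to the top point of `X_ρ` iff for
every limit `α < κ` the map `ξ ↦ ρ₂(ξ, α)` is finite-to-one on `A ∩ α`. -/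
theorem statement5 (κ : Cardinal.{u}) (hreg : κ.IsRegular) (hunc : Cardinal.aleph0 < κ)
    (C : Ordinal.{u} → Set Ordinal.{u}) (hC : IsCoherentCSeq κ.ord C)
    (ρ : Ordinal.{u} → Ordinal.{u} → ℕ)
    (hρ0 : ∀ α : Ordinal.{u}, ρ α α = 0)
    (hρs : ∀ α β : Ordinal.{u}, α < β → β < κ.ord →
      ρ α β = ρ α (sInf (C β ∩ Set.Ici α)) + 1)
    (A : Set {β : Ordinal.{u} // β ≤ κ.ord})
    (hAcount : A.Countable) (hAinf : A.Infinite)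
    (hAsub : ∀ x ∈ A, x.1 < κ.ord) :
    (∀ U ∈ @nhds _ (sqTop κ.ord ρ) ⟨κ.ord, le_rfl⟩, (A \ U).Finite) ↔
    (∀ α < κ.ord, Order.IsSuccLimit α → ∀ k : ℕ,
      {x : {β : Ordinal.{u} // β ≤ κ.ord} | x ∈ A ∧ x.1 < α ∧ ρ x.1 α = k}.Finite) := by
  classical
  constructor
  · -- convergence implies finite-to-one
    intro hconv α₀ hα₀o hα₀lim k₀
    by_contra hinf
    have hSinf : {x : {β : Ordinal.{u} // β ≤ κ.ord} |
        x ∈ A ∧ x.1 < α₀ ∧ ρ x.1 α₀ = k₀}.Infinite := hinf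
    set S := {x : {β : Ordinal.{u} // β ≤ κ.ord} | x ∈ A ∧ x.1 < α₀ ∧ ρ x.1 α₀ = k₀} with hSdef
    have hVinf : (Subtype.val '' S).Infinite := hSinf.image Subtype.val_injective.injOn
    set V := Subtype.val '' S with hVdef
    set g := Statement5Aux.minEnum V with hgdef
    have hgV : ∀ k, g k ∈ V := fun k => (Statement5Aux.minEnum_spec hVinf k).1
    have hgmono : StrictMono g := Statement5Aux.minEnum_strictMono hVinf
    have hVα₀ : ∀ v ∈ V, v < α₀ := by rintro v ⟨x, hx, rfl⟩; exact hx.2.1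
    have hgα₀ : ∀ k, g k < α₀ := fun k => hVα₀ _ (hgV k)
    have hbdd : BddAbove (Set.range g) := ⟨α₀, by rintro v ⟨k, rfl⟩; exact (hgα₀ k).le⟩
    set δ := ⨆ k, g k with hδdef
    have hgδ : ∀ k, g k < δ := fun k =>
      lt_of_lt_of_le (hgmono (Nat.lt_succ_self k)) (le_ciSup hbdd (k + 1))
    have hsup : ∀ γ < δ, ∃ N : ℕ, ∀ k ≥ N, γ < g k := by
      intro γ hγ
      obtain ⟨i, hi⟩ := exists_lt_of_lt_ciSup hγ
      exact ⟨i, fun k hk => lt_of_lt_of_le hi (hgmono.monotone hk)⟩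
    have hδα₀ : δ ≤ α₀ := ciSup_le fun k => (hgα₀ k).le
    have hδo : δ < κ.ord := lt_of_le_of_lt hδα₀ hα₀o
    have hδlim : Order.IsSuccLimit δ := by
      refine Ordinal.isSuccLimit_iff.2 ⟨fun h0 => not_lt_zero (h0 ▸ hgδ 0),
        Order.isSuccPrelimit_iff_succ_lt.2 fun a ha => ?_⟩
      obtain ⟨N, hN⟩ := hsup a ha
      exact lt_of_le_of_lt (Order.succ_le_of_lt (hN N (le_refl N))) (hgδ N)
    have hρα₀ : ∀ k, ρ (g k) α₀ = k₀ := by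
      intro k
      obtain ⟨x, hx, hxv⟩ := hgV k
      exact hxv ▸ hx.2.2
    obtain ⟨m₀, N₀, hmN⟩ := Statement5Aux.key_down hC hρs g hδlim hgδ hsup α₀ hδα₀ hα₀o
      ⟨k₀, 0, fun k _ => (hρα₀ k).le⟩
    have hQδ : ∃ m : ℕ, ∀ k, ρ (g k) δ ≤ m := Statement5Aux.evBound m₀ N₀ hmN
    have hQ : ∀ β : Ordinal.{u}, β < κ.ord → Order.IsSuccLimit β →
        ∃ m : ℕ, ∀ k, g k < β → ρ (g k) β ≤ m := by
      intro β hβo hβlim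
      rcases le_or_gt δ β with h | h
      · obtain ⟨m, hm⟩ := Statement5Aux.key_up hC hρs g hδlim hgδ hsup β h hβo hQδ
        exact ⟨m, fun k _ => hm k⟩
      · obtain ⟨N, hN⟩ := hsup β h
        refine ⟨(Finset.range N).sup fun k => ρ (g k) β, fun k hk => ?_⟩
        rcases lt_or_ge k N with hkN | hkN
        · exact Finset.le_sup (f := fun k => ρ (g k) β) (Finset.mem_range.2 hkN)
        · exact absurd hk (asymm (hN k hkN))
    have hQ' : ∀ β : Ordinal.{u}, ∃ m : ℕ,
        β < κ.ord → Order.IsSuccLimit β → ∀ k, g k < β → ρ (g k) β ≤ m := by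
      intro β
      by_cases h : β < κ.ord ∧ Order.IsSuccLimit β
      · obtain ⟨m, hm⟩ := hQ β h.1 h.2
        exact ⟨m, fun _ _ => hm⟩
      · exact ⟨0, fun h1 h2 => absurd ⟨h1, h2⟩ h⟩
    choose n hn using hQ'
    have hnot : ∀ x : {β : Ordinal.{u} // β ≤ κ.ord},
        (∃ k, x.1 = g k) → x ∉ sqBase κ.ord ρ n := by
      rintro x ⟨k, hk⟩ hmem
      rcases hmem with h | ⟨α, hαo, hαlim, hxα, hρn⟩
      · rw [hk] at h
        exact absurd h (ne_of_lt ((hgα₀ k).trans hα₀o))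
      · rw [hk] at hxα hρn
        exact absurd (hn α hαo hαlim k hxα) (not_le.2 hρn)
    have hUnhds : sqBase κ.ord ρ n ∈ @nhds _ (sqTop κ.ord ρ) ⟨κ.ord, le_rfl⟩ := by
      rw [sqTop, nhds_nhdsAdjoint_same]
      exact Filter.mem_sup.2 ⟨Filter.mem_pure.2 (Or.inl rfl),
        Filter.mem_iInf_of_mem n (Filter.mem_principal_self _)⟩
    have hfin := hconv _ hUnhds
    have hWsub : {x | x ∈ S ∧ x.1 ∈ Set.range g} ⊆ A \ sqBase κ.ord ρ n := by
      rintro x ⟨hxS, k, hk⟩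
      exact ⟨hxS.1, hnot x ⟨k, hk.symm⟩⟩
    have hWinf : {x | x ∈ S ∧ x.1 ∈ Set.range g}.Infinite := by
      apply Set.Infinite.of_image Subtype.val
      have hsub : Set.range g ⊆ Subtype.val '' {x | x ∈ S ∧ x.1 ∈ Set.range g} := by
        rintro v ⟨k, rfl⟩
        obtain ⟨x, hx, hxv⟩ := hgV k
        exact ⟨x, ⟨hx, ⟨k, hxv.symm⟩⟩, hxv⟩
      exact (Set.infinite_range_of_injective hgmono.injective).mono hsub
    exact hWinf (hfin.subset hWsub)
  · -- finite-to-one implies convergence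
    intro hfto U hU
    rw [sqTop, nhds_nhdsAdjoint_same, Filter.mem_sup] at hU
    obtain ⟨-, hU2⟩ := hU
    have hdir : Directed (· ≥ ·)
        fun n : Ordinal.{u} → ℕ => Filter.principal (sqBase κ.ord ρ n) := by
      intro n₁ n₂
      refine ⟨fun β => max (n₁ β) (n₂ β), ?_, ?_⟩
      · refine Filter.principal_mono.2 fun x hx => ?_
        rcases hx with h | ⟨α, h1, h2, h3, h4⟩
        · exact Or.inl h
        · exact Or.inr ⟨α, h1, h2, h3, lt_of_le_of_lt (le_max_left _ _) h4⟩
      · refine Filter.principal_mono.2 fun x hx => ?_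
        rcases hx with h | ⟨α, h1, h2, h3, h4⟩
        · exact Or.inl h
        · exact Or.inr ⟨α, h1, h2, h3, lt_of_le_of_lt (le_max_right _ _) h4⟩
    rw [Filter.mem_iInf_of_directed hdir] at hU2
    obtain ⟨n, hn⟩ := hU2
    rw [Filter.mem_principal] at hn
    obtain ⟨f, hfsurj⟩ := hAcount.exists_surjective hAinf.nonempty
    set α₁ := ⨆ i : ℕ, (f i).1.1 with hα₁def
    have hα₁ : α₁ < κ.ord := by
      apply Cardinal.iSup_lt_ord_lift_of_isRegular hreg
      · rwa [Cardinal.mk_nat, Cardinal.lift_aleph0]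
      · exact fun i => hAsub _ (f i).2
    set αs := α₁ + Ordinal.omega0 with hαsdef
    have hαslim : Order.IsSuccLimit αs := Ordinal.isSuccLimit_add α₁ Ordinal.isSuccLimit_omega0
    have hαso : αs < κ.ord := by
      rw [hαsdef, Cardinal.lt_ord, Ordinal.card_add, Ordinal.card_omega0]
      exact Cardinal.add_lt_of_lt hreg.aleph0_le (Cardinal.lt_ord.1 hα₁) hunc
    have hα₁αs : α₁ < αs := by
      rw [hαsdef]
      have h0 : α₁ + 0 < α₁ + Ordinal.omega0 := (add_lt_add_iff_left α₁).2 Ordinal.omega0_pos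
      simpa using h0
    have hAαs : ∀ x ∈ A, x.1 < αs := by
      intro x hx
      obtain ⟨i, hi⟩ := hfsurj ⟨x, hx⟩
      have h1 : (f i).1.1 ≤ α₁ :=
        le_ciSup (Ordinal.bddAbove_range fun i => (f i).1.1) i
      rw [hi] at h1
      exact lt_of_le_of_lt h1 hα₁αs
    have hmain : A \ U ⊆ ⋃ k ∈ Set.Iic (n αs),
        {x : {β : Ordinal.{u} // β ≤ κ.ord} | x ∈ A ∧ x.1 < αs ∧ ρ x.1 αs = k} := by
      rintro x ⟨hxA, hxU⟩
      have hxnb : x ∉ sqBase κ.ord ρ n := fun h => hxU (hn h)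
      have hxαs : x.1 < αs := hAαs x hxA
      have hρle : ρ x.1 αs ≤ n αs := by
        by_contra h
        exact hxnb (Or.inr ⟨αs, hαso, hαslim, hxαs, not_le.1 h⟩)
      exact Set.mem_biUnion hρle ⟨hxA, hxαs, rfl⟩
    exact ((Set.finite_Iic (n αs)).biUnion fun k _ => hfto αs hαso hαslim k).subset hmain
end
end

section
/- Let κ be a regular uncountable cardinal, let ⟨C_α : α < κ⟩ be a □(κ)-sequence with associated function ρ₂, and let X_ρ be the associated topology on κ+1. Then X_ρ is Hausdorff and the point κ is a Fréchet point of X_ρ; since all other points are isolated, X_ρ is a Fréchet space. -/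
open Set Filter Topology

universe u v

noncomputable section

/-- for a `□(κ)`-sequence on a regular uncountable `κ` with associated `ρ₂`,
the space `X_ρ` is Hausdorff, the top point is a Fréchet point, and (all other points being
isolated) `X_ρ` is a Fréchet space. -/
theorem statement6 (κ : Cardinal.{u}) (hreg : κ.IsRegular) (hunc : Cardinal.aleph0 < κ)
    (C : Ordinal.{u} → Set Ordinal.{u}) (hC : IsSquareSeq κ.ord C)
    (ρ : Ordinal.{u} → Ordinal.{u} → ℕ)
    (hρ0 : ∀ α : Ordinal.{u}, ρ α α = 0)
    (hρs : ∀ α β : Ordinal.{u}, α < β → β < κ.ord →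
      ρ α β = ρ α (sInf (C β ∩ Set.Ici α)) + 1) :
    @T2Space _ (sqTop κ.ord ρ) ∧
    IsFrechetPt (sqTop κ.ord ρ) ⟨κ.ord, le_rfl⟩ ∧
    ∀ x : {β : Ordinal.{u} // β ≤ κ.ord}, IsFrechetPt (sqTop κ.ord ρ) x := by
  
  classical
  set o := κ.ord with ho
  set top : {β : Ordinal.{u} // β ≤ o} := ⟨o, le_rfl⟩ with htop
  set F : Filter {β : Ordinal.{u} // β ≤ o} :=
    ⨅ n : Ordinal.{u} → ℕ, Filter.principal (sqBase o ρ n) with hFdef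
  have hnt : @nhds _ (sqTop o ρ) top = pure top ⊔ F := nhds_nhdsAdjoint_same _ _
  have hno : ∀ x : {β : Ordinal.{u} // β ≤ o}, x ≠ top →
      @nhds _ (sqTop o ρ) x = pure x := fun x hx => nhds_nhdsAdjoint_of_ne _ hx
  have hmemF : ∀ n, sqBase o ρ n ∈ F := fun n =>
    Filter.mem_iInf_of_mem n (Filter.mem_principal_self _)
  have htopbase : ∀ n, top ∈ sqBase o ρ n := fun n => Or.inl rfl
  have hbase_nhds : ∀ n, sqBase o ρ n ∈ @nhds _ (sqTop o ρ) top := by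
    intro n; rw [hnt]
    exact Filter.mem_sup.2 ⟨Filter.mem_pure.2 (htopbase n), hmemF n⟩
  have havoid : ∀ x : {β : Ordinal.{u} // β ≤ o}, x ≠ top →
      x ∉ sqBase o ρ (fun α => ρ x.1 α) := by
    intro x hx h
    rcases h with h | ⟨α, _, _, _, hlt⟩
    · exact hx (Subtype.ext h)
    · exact lt_irrefl _ hlt
  have hdisj : ∀ x : {β : Ordinal.{u} // β ≤ o}, x ≠ top →
      Disjoint (pure x : Filter _) (@nhds _ (sqTop o ρ) top) := by
    intro x hx
    rw [hnt]
    refine Filter.disjoint_iff.2 ⟨{x}, Filter.mem_pure.2 rfl, {x}ᶜ, ?_, disjoint_compl_right⟩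
    refine Filter.mem_sup.2 ⟨Filter.mem_pure.2 ?_, ?_⟩
    · intro h
      exact hx (Set.mem_singleton_iff.1 h).symm
    · refine Filter.mem_of_superset (hmemF (fun α => ρ x.1 α)) ?_
      intro y hy hyx
      exact havoid x hx (Set.mem_singleton_iff.1 hyx ▸ hy)
  have hfr_top : IsFrechetPt (sqTop o ρ) top := by
    intro A hA
    by_cases htopA : top ∈ A
    · exact ⟨fun _ => top, fun _ => htopA, (by letI := sqTop o ρ; exact tendsto_const_nhds)⟩
    by_cases hdiag : ∃ α : Ordinal.{u}, α < o ∧ Order.IsSuccLimit α ∧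
        ∀ n : ℕ, ∃ x ∈ A, x.1 < α ∧ n < ρ x.1 α
    · obtain ⟨α, hαo, hαl, hAn⟩ := hdiag
      choose u hu1 hu2 hu3 using hAn
      refine ⟨u, hu1, ?_⟩
      rw [hnt]
      refine Filter.Tendsto.mono_right ?_ le_sup_right
      rw [hFdef, Filter.tendsto_iInf]
      intro m
      rw [Filter.tendsto_principal]
      filter_upwards [Filter.eventually_ge_atTop (m α)] with n hn
      exact Or.inr ⟨α, hαo, hαl, hu2 n, lt_of_le_of_lt hn (hu3 n)⟩
    · exfalso
      push_neg at hdiag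
      have hN : ∀ α : Ordinal.{u}, ∃ n : ℕ, α < o → Order.IsSuccLimit α →
          ∀ x ∈ A, x.1 < α → ¬ n < ρ x.1 α := by
        intro α
        by_cases h : α < o ∧ Order.IsSuccLimit α
        · obtain ⟨n, hn⟩ := hdiag α h.1 h.2
          exact ⟨n, fun _ _ x hx hxα hlt => absurd hlt (not_lt.2 (hn x hx hxα))⟩
        · exact ⟨0, fun h1 h2 => absurd ⟨h1, h2⟩ h⟩
      choose N hNs using hN
      obtain ⟨x, hx1, hx2⟩ := (by letI := sqTop o ρ; exact mem_closure_iff_nhds.1 hA _ (hbase_nhds N))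
      rcases hx1 with h | ⟨α, hαo, hαl, hxα, hlt⟩
      · exact htopA ((Subtype.ext h : x = top) ▸ hx2)
      · exact hNs α hαo hαl x hx2 hxα hlt
  refine ⟨?_, hfr_top, ?_⟩
  · rw [@t2Space_iff_disjoint_nhds _ (sqTop o ρ)]
    intro x y hxy
    by_cases hx : x = top
    · subst hx
      have hy : y ≠ top := fun h => hxy h.symm
      rw [hno y hy]
      exact (hdisj y hy).symm
    · rw [hno x hx]
      by_cases hy : y = top
      · subst hy; exact hdisj x hx
      · rw [hno y hy]
        exact (Filter.disjoint_pure_pure).2 hxy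
  · intro x
    by_cases hx : x = top
    · subst hx; exact hfr_top
    · intro A hA
      have hxA : x ∈ A := by
        have h := by
          letI := sqTop o ρ
          exact mem_closure_iff_nhds.1 hA ({x} : Set _)
            (by rw [hno x hx]; exact Filter.mem_pure.2 rfl)
        obtain ⟨y, hy1, hy2⟩ := h
        exact Set.mem_singleton_iff.1 hy1 ▸ hy2
      refine ⟨fun _ => x, fun _ => hxA, ?_⟩
      rw [hno x hx]
      exact Filter.tendsto_pure.2 (Filter.Eventually.of_forall fun _ => rfl)
end
end

section
/- Let κ be a regular uncountable cardinal, let ⟨C_α : α < κ⟩ be a □(κ)-sequence with associated function ρ₂, and let X_ρ be the associated topology on κ+1. Then the point κ is an α₁-point of X_ρ: whenever ⟨A_n : n < ω⟩ are countable subsets of κ each converging to κ, there is a single set B ⊆ κ converging to κ with A_n \ B finite for all n. Consequently X_ρ is an α₁-space. -/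
open Set Filter Topology

universe u v

noncomputable section

section SquareAux

/-! ### Auxiliary lemmas for statement7 -/

lemma sqBase_antitone {o : Ordinal.{u}} {ρ : Ordinal.{u} → Ordinal.{u} → ℕ}
    {n m : Ordinal.{u} → ℕ} (h : ∀ α, n α ≤ m α) :
    sqBase o ρ m ⊆ sqBase o ρ n := by
  rintro x (hx | ⟨α, h1, h2, h3, h4⟩)
  · exact Or.inl hx
  · exact Or.inr ⟨α, h1, h2, h3, lt_of_le_of_lt (h α) h4⟩

lemma sqBase_mem_nhds {o : Ordinal.{u}} {ρ : Ordinal.{u} → Ordinal.{u} → ℕ}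
    (n : Ordinal.{u} → ℕ) :
    sqBase o ρ n ∈ @nhds _ (sqTop o ρ) ⟨o, le_rfl⟩ := by
  rw [sqTop, nhds_nhdsAdjoint_same]
  exact Filter.mem_sup.mpr ⟨Filter.mem_pure.2 (Or.inl rfl),
    Filter.mem_iInf_of_mem n (Filter.mem_principal_self _)⟩

lemma exists_sqBase_subset {o : Ordinal.{u}} {ρ : Ordinal.{u} → Ordinal.{u} → ℕ}
    {U : Set {β : Ordinal.{u} // β ≤ o}}
    (hU : U ∈ @nhds _ (sqTop o ρ) ⟨o, le_rfl⟩) : ∃ n, sqBase o ρ n ⊆ U := by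
  rw [sqTop, nhds_nhdsAdjoint_same, Filter.mem_sup] at hU
  have hd : Directed (· ≥ ·) fun n : Ordinal.{u} → ℕ => Filter.principal (sqBase o ρ n) := by
    intro a b
    exact ⟨fun α => max (a α) (b α),
      Filter.principal_mono.2 (sqBase_antitone fun α => le_max_left _ _),
      Filter.principal_mono.2 (sqBase_antitone fun α => le_max_right _ _)⟩
  obtain ⟨n, hn⟩ := (Filter.mem_iInf_of_directed hd U).1 hU.2
  exact ⟨n, Filter.mem_principal.1 hn⟩

/-- Tail coherence of `ρ₂`: for a limit `γ ≤ β`, on a tail of `γ` the function `ρ₂(·, β)`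
equals `ρ₂(·, γ)` shifted by a constant. -/
lemma rho_tail_eq {κ : Cardinal.{u}} {C : Ordinal.{u} → Set Ordinal.{u}}
    (hC : IsCoherentCSeq κ.ord C) {ρ : Ordinal.{u} → Ordinal.{u} → ℕ}
    (hρs : ∀ α β : Ordinal.{u}, α < β → β < κ.ord →
      ρ α β = ρ α (sInf (C β ∩ Set.Ici α)) + 1)
    {γ : Ordinal.{u}} (hγ : Order.IsSuccLimit γ) :
    ∀ β : Ordinal.{u}, γ ≤ β → β < κ.ord →
      ∃ l c, l < γ ∧ ∀ ξ, l < ξ → ξ < γ → ρ ξ β = c + ρ ξ γ := by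
  intro β
  induction β using Ordinal.induction with
  | h β IH =>
  intro hγβ hβ
  rcases eq_or_lt_of_le hγβ with rfl | hlt
  · exact ⟨0, 0, hγ.pos, fun ξ _ _ => (Nat.zero_add _).symm⟩
  by_cases hacc : ∀ l < γ, ∃ d ∈ C β, l < d ∧ d < γ
  · -- `γ` is an accumulation point of `C β`
    have hcoh : C β ∩ Set.Iio γ = C γ := hC.2.2 β hβ γ ⟨hγ.pos.ne', hacc⟩
    refine ⟨0, 0, hγ.pos, fun ξ _ hξγ => ?_⟩
    have hξβ : ξ < β := hξγ.trans hlt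
    obtain ⟨d, hd, hξd, hdγ⟩ := hacc ξ hξγ
    have hdE : d ∈ C β ∩ Set.Ici ξ := ⟨hd, le_of_lt hξd⟩
    have hmem := csInf_mem (⟨d, hdE⟩ : (C β ∩ Set.Ici ξ).Nonempty)
    have hinflt : sInf (C β ∩ Set.Ici ξ) < γ :=
      lt_of_le_of_lt (csInf_le (OrderBot.bddBelow _) hdE) hdγ
    have hkey : sInf (C β ∩ Set.Ici ξ) = sInf (C γ ∩ Set.Ici ξ) := by
      have hsub : C γ ∩ Set.Ici ξ ⊆ C β ∩ Set.Ici ξ := by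
        intro z hz
        have hz1 : z ∈ C β ∩ Set.Iio γ := by rw [hcoh]; exact hz.1
        exact ⟨hz1.1, hz.2⟩
      have hdγ' : d ∈ C γ := by rw [← hcoh]; exact ⟨hd, hdγ⟩
      have hne2 : (C γ ∩ Set.Ici ξ).Nonempty := ⟨d, hdγ', le_of_lt hξd⟩
      refine le_antisymm (csInf_le_csInf (OrderBot.bddBelow _) hne2 hsub) ?_
      refine csInf_le (OrderBot.bddBelow _) ?_
      have hmemγ : sInf (C β ∩ Set.Ici ξ) ∈ C γ := by
        rw [← hcoh]; exact ⟨hmem.1, hinflt⟩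
      exact ⟨hmemγ, hmem.2⟩
    rw [hρs ξ β hξβ hβ, hρs ξ γ hξγ (hlt.trans hβ), hkey, Nat.zero_add]
  · push_neg at hacc
    obtain ⟨l₀, hl₀γ, hl₀⟩ := hacc
    have hβ0 : β ≠ 0 := fun h0 => by have := h0 ▸ hlt; simp at this
    have hCβ : (C β ∩ Set.Ici γ).Nonempty ∧ C β ⊆ Set.Iio β := by
      rcases Ordinal.zero_or_succ_or_isSuccLimit β with h0 | ⟨a, ha⟩ | hblim
      · exact absurd h0 hβ0
      · have haβ : a + 1 = β := by rw [← ha, Ordinal.add_one_eq_succ]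
        have hCa : C β = {a} := by rw [← haβ]; exact hC.2.1 a (haβ ▸ hβ)
        have hγa : γ ≤ a := by
          have : γ < a + 1 := haβ ▸ hlt
          exact Order.lt_succ_iff.1 (by rwa [Ordinal.add_one_eq_succ] at this)
        constructor
        · exact ⟨a, by rw [hCa]; exact rfl, hγa⟩
        · rw [hCa]
          intro z hz
          rw [Set.mem_singleton_iff] at hz
          subst hz
          rw [← haβ, Ordinal.add_one_eq_succ]
          exact Order.lt_succ (α := Ordinal.{u}) _
      · have hclub := hC.1 β hβ hblim
        obtain ⟨d, hd, hγd⟩ := hclub.2.2 γ hlt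
        exact ⟨⟨d, hd, le_of_lt hγd⟩, hclub.1⟩
    obtain ⟨hne, hCsub⟩ := hCβ
    have hτmem := csInf_mem hne
    set τ := sInf (C β ∩ Set.Ici γ) with hτdef
    have hτβ : τ < β := hCsub hτmem.1
    have hγτ : γ ≤ τ := hτmem.2
    have hstep : ∀ ξ, l₀ < ξ → ξ < γ → sInf (C β ∩ Set.Ici ξ) = τ := by
      intro ξ hl₀ξ hξγ
      have hsub : C β ∩ Set.Ici γ ⊆ C β ∩ Set.Ici ξ := fun z hz =>
        ⟨hz.1, le_trans (le_of_lt hξγ) hz.2⟩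
      have hmem2 := csInf_mem (⟨τ, hsub hτmem⟩ : (C β ∩ Set.Ici ξ).Nonempty)
      have h2 : γ ≤ sInf (C β ∩ Set.Ici ξ) :=
        hl₀ _ hmem2.1 (lt_of_lt_of_le hl₀ξ hmem2.2)
      exact le_antisymm (csInf_le (OrderBot.bddBelow _) (hsub hτmem))
        (csInf_le (OrderBot.bddBelow _) ⟨hmem2.1, h2⟩)
    rcases eq_or_lt_of_le hγτ with heq | hγτlt
    · refine ⟨l₀, 1, hl₀γ, fun ξ h1 h2 => ?_⟩
      rw [hρs ξ β (h2.trans hlt) hβ, hstep ξ h1 h2, ← heq]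
      omega
    · obtain ⟨l₁, c₁, hl₁γ, H₁⟩ := IH τ hτβ (le_of_lt hγτlt) (hτβ.trans hβ)
      refine ⟨max l₀ l₁, c₁ + 1, max_lt hl₀γ hl₁γ, fun ξ h1 h2 => ?_⟩
      have h1a : l₀ < ξ := lt_of_le_of_lt (le_max_left _ _) h1
      have h1b : l₁ < ξ := lt_of_le_of_lt (le_max_right _ _) h1
      rw [hρs ξ β (h2.trans hlt) hβ, hstep ξ h1a h2, H₁ ξ h1b h2]
      omega

lemma exists_strictMono_into {T : Set Ordinal.{u}} (hT : T.Infinite) :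
    ∃ f : ℕ → Ordinal.{u}, StrictMono f ∧ ∀ n, f n ∈ T := by
  let S : ℕ → Set Ordinal.{u} := fun n => Nat.rec T (fun _ s => s \ {sInf s}) n
  have hSsucc : ∀ n, S (n + 1) = S n \ {sInf (S n)} := fun n => rfl
  have hSinf : ∀ n, (S n).Infinite := by
    intro n
    induction n with
    | zero => exact hT
    | succ n ih => rw [hSsucc]; exact ih.diff (Set.finite_singleton _)
  have hSsub : ∀ n, S n ⊆ T := by
    intro n
    induction n with
    | zero => exact subset_rfl
    | succ n ih => rw [hSsucc]; exact Set.diff_subset.trans ih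
  have hmem : ∀ n, sInf (S n) ∈ S n := fun n => csInf_mem (hSinf n).nonempty
  refine ⟨fun n => sInf (S n), strictMono_nat_of_lt_succ fun n => ?_,
    fun n => hSsub n (hmem n)⟩
  have h1 := hmem (n + 1)
  rw [hSsucc] at h1
  exact (csInf_le (OrderBot.bddBelow _) h1.1).lt_of_ne
    fun h => h1.2 (Set.mem_singleton_iff.mpr h.symm)

/-- Any set converging to the top point has `ρ₂(·, γ)` finite-to-one below every limit
`γ < κ.ord`. -/
lemma conv_f2o {κ : Cardinal.{u}} {C : Ordinal.{u} → Set Ordinal.{u}}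
    (hC : IsCoherentCSeq κ.ord C) {ρ : Ordinal.{u} → Ordinal.{u} → ℕ}
    (hρs : ∀ α β : Ordinal.{u}, α < β → β < κ.ord →
      ρ α β = ρ α (sInf (C β ∩ Set.Ici α)) + 1)
    {A : Set {β : Ordinal.{u} // β ≤ κ.ord}}
    (hconv : SetConverges (sqTop κ.ord ρ) A ⟨κ.ord, le_rfl⟩)
    {γ : Ordinal.{u}} (hγ : Order.IsSuccLimit γ) (hγo : γ < κ.ord) (m : ℕ) :
    {x | x ∈ A ∧ x.1 < γ ∧ ρ x.1 γ ≤ m}.Finite := by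
  classical
  by_contra hfin
  have hinf : {x | x ∈ A ∧ x.1 < γ ∧ ρ x.1 γ ≤ m}.Infinite := hfin
  set W := {x : {β : Ordinal.{u} // β ≤ κ.ord} | x ∈ A ∧ x.1 < γ ∧ ρ x.1 γ ≤ m} with hWdef
  have hTinf : (Subtype.val '' W).Infinite := hinf.image Subtype.coe_injective.injOn
  obtain ⟨f, hfmono, hfT⟩ := exists_strictMono_into hTinf
  have hbdd : BddAbove (Set.range f) := Ordinal.bddAbove_range f
  set γ' := ⨆ n, f n with hγ'def
  have hflt : ∀ n, f n < γ' := fun n =>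
    lt_of_lt_of_le (hfmono (Nat.lt_succ_self n)) (le_ciSup hbdd (n + 1))
  have hfγ : ∀ n, f n < γ := by
    intro n
    obtain ⟨x, hxW, hxv⟩ := hfT n
    rw [← hxv]
    exact hxW.2.1
  have hγ'γ : γ' ≤ γ := ciSup_le fun n => (hfγ n).le
  have hγ'o : γ' < κ.ord := lt_of_le_of_lt hγ'γ hγo
  have hγ'lim : Order.IsSuccLimit γ' := by
    refine Ordinal.isSuccLimit_iff.2 ⟨fun h => by have := h ▸ hflt 0; simp at this, Order.isSuccPrelimit_of_succ_lt fun a ha => ?_⟩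
    obtain ⟨n, hn⟩ := (lt_ciSup_iff hbdd).1 ha
    exact lt_of_le_of_lt (Order.succ_le_of_lt hn) (hflt n)
  have htail : ∀ l, l < γ' → ∃ N : ℕ, ∀ k, N ≤ k → l < f k := by
    intro l hl
    obtain ⟨N, hN⟩ := (lt_ciSup_iff hbdd).1 hl
    exact ⟨N, fun k hk => lt_of_lt_of_le hN (hfmono.monotone hk)⟩
  obtain ⟨l₀, c₀, hl₀, H₀⟩ := rho_tail_eq hC hρs hγ'lim γ hγ'γ hγo
  obtain ⟨N₀, hN₀⟩ := htail l₀ hl₀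
  set g : ℕ → Ordinal.{u} := fun k => f (N₀ + k) with hgdef
  have hgl₀ : ∀ k, l₀ < g k := fun k => hN₀ _ (Nat.le_add_right _ _)
  have hgγ' : ∀ k, g k < γ' := fun k => hflt _
  have hgT : ∀ k, g k ∈ Subtype.val '' W := fun k => hfT _
  have hgmono : StrictMono g := fun a b h => hfmono (by omega)
  have hgρ : ∀ k, ρ (g k) γ' ≤ m := by
    intro k
    obtain ⟨x, hxW, hxv⟩ := hgT k
    have h1 : ρ (g k) γ = c₀ + ρ (g k) γ' := H₀ _ (hgl₀ k) (hgγ' k)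
    have h2 : ρ (g k) γ ≤ m := by rw [← hxv]; exact hxW.2.2
    omega
  have hgtail : ∀ l, l < γ' → ∃ N : ℕ, ∀ k, N ≤ k → l < g k := by
    intro l hl
    obtain ⟨N, hN⟩ := htail l hl
    exact ⟨N, fun k hk => hN _ (by omega)⟩
  have hclaim : ∀ α : Ordinal.{u}, α < κ.ord → ∃ b : ℕ, ∀ k, g k < α → ρ (g k) α ≤ b := by
    intro α hα
    rcases le_or_gt γ' α with hle | hlt
    · obtain ⟨l₁, c₁, hl₁, H₁⟩ := rho_tail_eq hC hρs hγ'lim α hle hα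
      obtain ⟨N, hN⟩ := hgtail l₁ hl₁
      refine ⟨max (c₁ + m) ((Finset.range N).sup fun k => ρ (g k) α), fun k _ => ?_⟩
      rcases lt_or_ge k N with hk | hk
      · exact le_max_of_le_right (Finset.le_sup (f := fun k => ρ (g k) α) (Finset.mem_range.2 hk))
      · have h1 := H₁ (g k) (hN k hk) (hgγ' k)
        have h2 := hgρ k
        exact le_max_of_le_left (by omega)
    · obtain ⟨N, hN⟩ := hgtail α hlt
      refine ⟨(Finset.range N).sup fun k => ρ (g k) α, fun k hk => ?_⟩
      have hkN : k < N := by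
        by_contra hcon
        push_neg at hcon
        exact absurd hk (not_lt_of_ge (hN k hcon).le)
      exact Finset.le_sup (f := fun k => ρ (g k) α) (Finset.mem_range.2 hkN)
  set nf : Ordinal.{u} → ℕ := fun α => if h : α < κ.ord then (hclaim α h).choose else 0
    with hnfdef
  have hnfspec : ∀ α, α < κ.ord → ∀ k, g k < α → ρ (g k) α ≤ nf α := by
    intro α h k hk
    have hsp := (hclaim α h).choose_spec k hk
    simpa [hnfdef, dif_pos h] using hsp
  have hxk : ∀ k, ∃ x : {β : Ordinal.{u} // β ≤ κ.ord}, x ∈ A ∧ x.1 = g k := by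
    intro k
    obtain ⟨x, hxW, hxv⟩ := hgT k
    exact ⟨x, hxW.1, hxv⟩
  choose h hhA hhv using hxk
  have hhinj : Function.Injective h := by
    intro a b hab
    apply hgmono.injective
    rw [← hhv a, ← hhv b, hab]
  have hsub : Set.range h ⊆ A \ sqBase κ.ord ρ nf := by
    rintro _ ⟨k, rfl⟩
    refine ⟨hhA k, fun hmem => ?_⟩
    rcases hmem with htop | ⟨α, hα, _, hxα, hρα⟩
    · have hlt' : (h k).1 < κ.ord := by
        rw [hhv k]
        exact lt_of_lt_of_le (hgγ' k) (le_of_lt hγ'o)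
      exact absurd htop (ne_of_lt hlt')
    · rw [hhv k] at hxα hρα
      exact absurd hρα (not_lt_of_ge (hnfspec α hα k hxα))
  have hfinal := hconv _ (sqBase_mem_nhds nf)
  exact Set.infinite_range_of_injective hhinj (hfinal.subset hsub)

end SquareAux

/-- for a `□(κ)`-sequence on a regular uncountable `κ` with associated `ρ₂`,
the top point of `X_ρ` is an α₁-point (in the set form: countably many countable subsets of
`κ` converging to the top point admit a single converging pseudo-union), and consequently
`X_ρ` is an α₁-space. -/
theorem statement7 (κ : Cardinal.{u}) (hreg : κ.IsRegular) (hunc : Cardinal.aleph0 < κ)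
    (C : Ordinal.{u} → Set Ordinal.{u}) (hC : IsSquareSeq κ.ord C)
    (ρ : Ordinal.{u} → Ordinal.{u} → ℕ)
    (hρ0 : ∀ α : Ordinal.{u}, ρ α α = 0)
    (hρs : ∀ α β : Ordinal.{u}, α < β → β < κ.ord →
      ρ α β = ρ α (sInf (C β ∩ Set.Ici α)) + 1) :
    (∀ A : ℕ → Set {β : Ordinal.{u} // β ≤ κ.ord},
      (∀ n, (A n).Countable) → (∀ n, ∀ x ∈ A n, x.1 < κ.ord) →
      (∀ n, SetConverges (sqTop κ.ord ρ) (A n) ⟨κ.ord, le_rfl⟩) →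
      ∃ B : Set {β : Ordinal.{u} // β ≤ κ.ord},
        (∀ x ∈ B, x.1 < κ.ord) ∧
        SetConverges (sqTop κ.ord ρ) B ⟨κ.ord, le_rfl⟩ ∧
        ∀ n, (A n \ B).Finite) ∧
    ∀ x : {β : Ordinal.{u} // β ≤ κ.ord}, IsAlpha1Pt (sqTop κ.ord ρ) x := by
    classical
  obtain ⟨hCcoh, -⟩ := hC
  have part1 : ∀ A : ℕ → Set {β : Ordinal.{u} // β ≤ κ.ord},
      (∀ n, (A n).Countable) → (∀ n, ∀ x ∈ A n, x.1 < κ.ord) →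
      (∀ n, SetConverges (sqTop κ.ord ρ) (A n) ⟨κ.ord, le_rfl⟩) →
      ∃ B : Set {β : Ordinal.{u} // β ≤ κ.ord},
        (∀ x ∈ B, x.1 < κ.ord) ∧
        SetConverges (sqTop κ.ord ρ) B ⟨κ.ord, le_rfl⟩ ∧
        ∀ n, (A n \ B).Finite := by
    intro A hcnt helt hconv
    have hTc : (insert 0 (Subtype.val '' ⋃ k, A k) : Set Ordinal.{u}).Countable :=
      ((Set.countable_iUnion hcnt).image _).insert 0
    obtain ⟨fc, hfc⟩ := hTc.exists_eq_range ⟨0, Set.mem_insert _ _⟩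
    have hfclt : ∀ n, fc n < κ.ord := by
      intro n
      have hmem : fc n ∈ insert 0 (Subtype.val '' ⋃ k, A k) := by
        rw [hfc]; exact Set.mem_range_self n
      rcases Set.mem_insert_iff.1 hmem with h0 | ⟨x, hx, hxv⟩
      · rw [h0, Cardinal.lt_ord, Ordinal.card_zero]
        exact lt_of_lt_of_le Cardinal.aleph0_pos hreg.aleph0_le
      · obtain ⟨k, hk⟩ := Set.mem_iUnion.1 hx
        rw [← hxv]
        exact helt k x hk
    have hcof : Cardinal.lift.{u, 0} (Cardinal.mk ℕ) < (κ.ord).cof := by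
      rw [Cardinal.mk_nat, Cardinal.lift_aleph0, hreg.cof_eq]
      exact hunc
    have hs : (⨆ n, fc n) < κ.ord := Ordinal.iSup_lt_ord_lift hcof hfclt
    set s := ⨆ n, fc n with hsdef
    set δ := s + Ordinal.omega0 with hδdef
    have hδlim : Order.IsSuccLimit δ := Ordinal.isSuccLimit_add s Ordinal.isSuccLimit_omega0
    have hδo : δ < κ.ord := by
      rw [Cardinal.lt_ord, hδdef, Ordinal.card_add, Ordinal.card_omega0]
      exact Cardinal.add_lt_of_lt hreg.aleph0_le (Cardinal.lt_ord.1 hs) hunc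
    have hsδ : s < δ := by
      have h1 : s + 0 < s + Ordinal.omega0 :=
        (add_lt_add_iff_left s).2 Ordinal.omega0_pos
      rwa [add_zero] at h1
    have heltδ : ∀ k, ∀ x ∈ A k, x.1 < δ := by
      intro k x hx
      have hmem : x.1 ∈ insert 0 (Subtype.val '' ⋃ k, A k) :=
        Set.mem_insert_of_mem _ ⟨x, Set.mem_iUnion.2 ⟨k, hx⟩, rfl⟩
      rw [hfc] at hmem
      obtain ⟨n, hn⟩ := hmem
      calc x.1 = fc n := hn.symm
        _ ≤ s := le_ciSup (Ordinal.bddAbove_range fc) n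
        _ < δ := hsδ
    refine ⟨⋃ k, {x | x ∈ A k ∧ k ≤ ρ x.1 δ}, ?_, ?_, ?_⟩
    · intro x hx
      obtain ⟨k, hk⟩ := Set.mem_iUnion.1 hx
      exact helt k x hk.1
    · intro U hU
      obtain ⟨n, hn⟩ := exists_sqBase_subset hU
      have hfinV : (⋃ k : Fin (n δ + 1),
          {x | x ∈ A k ∧ x.1 < δ ∧ ρ x.1 δ ≤ n δ}).Finite :=
        Set.finite_iUnion fun k => conv_f2o hCcoh hρs (hconv k) hδlim hδo (n δ)
      refine hfinV.subset ?_
      rintro x ⟨hxB, hxU⟩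
      obtain ⟨k, hk⟩ := Set.mem_iUnion.1 hxB
      have hxδ : x.1 < δ := heltδ k x hk.1
      have hρδ : ρ x.1 δ ≤ n δ := by
        by_contra hcon
        push_neg at hcon
        exact hxU (hn (Or.inr ⟨δ, hδo, hδlim, hxδ, hcon⟩))
      have hkle : k < n δ + 1 := by
        have := hk.2
        omega
      exact Set.mem_iUnion.2 ⟨⟨k, hkle⟩, hk.1, hxδ, hρδ⟩
    · intro k
      refine (conv_f2o hCcoh hρs (hconv k) hδlim hδo (k - 1)).subset ?_
      rintro x ⟨hxA, hxB⟩
      have hρk : ρ x.1 δ < k := by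
        by_contra hcon
        push_neg at hcon
        exact hxB (Set.mem_iUnion.2 ⟨k, hxA, hcon⟩)
      exact ⟨hxA, heltδ k x hxA, by omega⟩
  refine ⟨part1, ?_⟩
  intro x u hu
  by_cases hx : x = (⟨κ.ord, le_rfl⟩ : {β : Ordinal.{u} // β ≤ κ.ord})
  · subst hx
    set tp : {β : Ordinal.{u} // β ≤ κ.ord} := ⟨κ.ord, le_rfl⟩ with htp
    have hAcnt : ∀ n, (Set.range (u n) \ {tp}).Countable := fun n =>
      (Set.countable_range _).mono Set.diff_subset
    have hAelt : ∀ n, ∀ y ∈ Set.range (u n) \ {tp}, y.1 < κ.ord := by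
      intro n y hy
      refine lt_of_le_of_ne y.2 fun he => hy.2 ?_
      exact Subtype.ext he
    have hAconv : ∀ n, SetConverges (sqTop κ.ord ρ) (Set.range (u n) \ {tp}) tp := by
      intro n U hU
      have h2 : u n ⁻¹' U ∈ Filter.atTop := hu n hU
      rw [← Nat.cofinite_eq_atTop, Filter.mem_cofinite] at h2
      refine (h2.image (u n)).subset ?_
      rintro y ⟨⟨⟨k, rfl⟩, -⟩, hyU⟩
      exact ⟨k, hyU, rfl⟩
    obtain ⟨B, hB1, hB2, hB3⟩ :=
      part1 (fun n => Set.range (u n) \ {tp}) hAcnt hAelt hAconv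
    set B' := B ∩ ⋃ n, (Set.range (u n) \ {tp}) with hB'def
    have hB'cnt : B'.Countable :=
      (Set.countable_iUnion hAcnt).mono Set.inter_subset_right
    have hB'conv : SetConverges (sqTop κ.ord ρ) B' tp := fun U hU =>
      (hB2 U hU).subset (Set.diff_subset_diff_left Set.inter_subset_left)
    have hAB' : ∀ n, ((Set.range (u n) \ {tp}) \ B').Finite := by
      intro n
      refine (hB3 n).subset ?_
      rintro y ⟨hy1, hy2⟩
      exact ⟨hy1, fun hyB => hy2 ⟨hyB, Set.mem_iUnion.2 ⟨n, hy1⟩⟩⟩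
    by_cases hBf : B'.Finite
    · refine ⟨fun _ => tp, tendsto_const_pure.mono_right
        (@pure_le_nhds _ (sqTop κ.ord ρ) tp), ?_⟩
      intro n
      have hsub : Set.range (u n) \ Set.range (fun _ : ℕ => tp) ⊆
          ((Set.range (u n) \ {tp}) \ B') ∪ B' := by
        rintro y ⟨hy1, hy2⟩
        have hytp : y ≠ tp := fun he => hy2 ⟨0, he.symm⟩
        by_cases hyB : y ∈ B'
        · exact Or.inr hyB
        · exact Or.inl ⟨⟨hy1, hytp⟩, hyB⟩
      exact (((hAB' n).union hBf).subset hsub)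
    · have hinfB : B'.Infinite := hBf
      have hcnt' : Countable ↥B' := hB'cnt.to_subtype
      have hinf' : Infinite ↥B' := hinfB.to_subtype
      obtain ⟨e⟩ : Nonempty (ℕ ≃ ↥B') := nonempty_equiv_of_countable
      set v : ℕ → {β : Ordinal.{u} // β ≤ κ.ord} := fun k => ((e k : ↥B') : _) with hvdef
      have hvinj : Function.Injective v :=
        Subtype.coe_injective.comp e.injective
      have hvmem : ∀ k, v k ∈ B' := fun k => (e k).2
      have hvrange : B' ⊆ Set.range v := by
        intro y hy
        exact ⟨e.symm ⟨y, hy⟩, by simp [hvdef]⟩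
      refine ⟨v, ?_, ?_⟩
      · rw [Filter.tendsto_def]
        intro U hU
        rw [← Nat.cofinite_eq_atTop, Filter.mem_cofinite]
        have hfin : (B' \ U).Finite := hB'conv U hU
        refine (hfin.preimage hvinj.injOn).subset ?_
        intro k hk
        exact ⟨hvmem k, hk⟩
      · intro n
        have hsub : Set.range (u n) \ Set.range v ⊆
            ((Set.range (u n) \ {tp}) \ B') ∪ {tp} := by
          rintro y ⟨hy1, hy2⟩
          rcases eq_or_ne y tp with rfl | hne
          · exact Or.inr rfl
          · exact Or.inl ⟨⟨hy1, hne⟩, fun hyB => hy2 (hvrange hyB)⟩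
        exact ((hAB' n).union (Set.finite_singleton tp)).subset hsub
  · have hnx : @nhds _ (sqTop κ.ord ρ) x = pure x := by
      rw [sqTop]
      exact nhds_nhdsAdjoint_of_ne _ hx
    refine ⟨fun _ => x, by rw [hnx]; exact tendsto_const_pure, ?_⟩
    intro n
    have h2 : u n ⁻¹' {x} ∈ Filter.atTop := by
      refine hu n ?_
      rw [hnx]
      exact Filter.mem_pure.2 rfl
    rw [← Nat.cofinite_eq_atTop, Filter.mem_cofinite] at h2
    refine ((h2.image (u n)).union (Set.finite_singleton x)).subset ?_
    rintro y ⟨⟨k, rfl⟩, -⟩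
    rcases eq_or_ne (u n k) x with he | he
    · exact Or.inr he
    · exact Or.inl ⟨k, he, rfl⟩
end
end

section
/- Assume ◊(E) holds for E = {α < ω₂ : cf(α) = ω}. Then there is a ladder system ⟨S_α : α ∈ E⟩ such that each S_α has order type ω, sup S_α = α, and for every unbounded X ⊆ ω₂ the set {α ∈ E : S_α ⊆ X} is stationary in ω₂. -/
open Set Filter Topology

universe u v

noncomputable section

/-- `S` is a ladder at `α`: a set of ordinals of order type `ω` (the range of a strictly
increasing `ω`-sequence), contained in and cofinal in `α`. -/
def IsLadderAt (α : Ordinal.{u}) (S : Set Ordinal.{u}) : Prop :=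
  ∃ f : ℕ → Ordinal.{u}, StrictMono f ∧ S = Set.range f ∧
    (∀ n, f n < α) ∧ ∀ γ < α, ∃ n, γ < f n

/-- `E = {α < ω₂ : cf(α) = ω}`. -/
def Etwo : Set Ordinal.{u} :=
  {α | α < (Cardinal.aleph 2).ord ∧ Ordinal.cof α = Cardinal.aleph0}

/-- The basic neighborhood of the top point of `o + 1` in the ladder topology determined by
removing the finite set `F α` from each ladder `S α`: `{o} ∪ ⋃_{α ∈ E} (S α \ F α)`. -/
def ladderBase (o : Ordinal.{u}) (E : Set Ordinal.{u}) (S : Ordinal.{u} → Set Ordinal.{u})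
    (F : Ordinal.{u} → Set Ordinal.{u}) : Set {β : Ordinal.{u} // β ≤ o} :=
  {x | x.1 = o ∨ ∃ α ∈ E, x.1 ∈ S α ∧ x.1 ∉ F α}

/-- The ladder topology on `o + 1` (as the subtype of ordinals `≤ o`): every point below `o` is
isolated, and the neighborhoods of the top point are generated by the sets
`{o} ∪ ⋃_{α ∈ E} T α` where `T α ⊆ S α` and `S α \ T α` is finite. -/
def ladderTop (o : Ordinal.{u}) (E : Set Ordinal.{u}) (S : Ordinal.{u} → Set Ordinal.{u}) :
    TopologicalSpace {β : Ordinal.{u} // β ≤ o} :=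
  nhdsAdjoint ⟨o, le_rfl⟩
    (⨅ F ∈ {F : Ordinal.{u} → Set Ordinal.{u} | ∀ α ∈ E, (F α).Finite},
      Filter.principal (ladderBase o E S F))

lemma exists_cofinal_seq {α : Ordinal.{u}} (h : Ordinal.cof α = Cardinal.aleph0) :
    ∃ g : ℕ → Ordinal.{u}, (∀ n, g n < α) ∧ ∀ γ < α, ∃ n, γ ≤ g n := by
  obtain ⟨ι, f, hf, hι⟩ := Ordinal.exists_lsub_cof α
  rw [h] at hι
  obtain ⟨d⟩ := Cardinal.denumerable_iff.2 hι
  refine ⟨fun n => f ((Denumerable.eqv ι).symm n), fun n => hf ▸ Ordinal.lt_lsub _ _, ?_⟩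
  intro γ hγ
  obtain ⟨i, hi⟩ := Ordinal.lt_lsub_iff.1 (hf ▸ hγ)
  exact ⟨Denumerable.eqv ι i, by simpa using hi⟩

lemma exists_ladder_subset {α : Ordinal.{u}} (h : Ordinal.cof α = Cardinal.aleph0)
    {B : Set Ordinal.{u}} (hB : ∀ γ < α, ∃ ξ ∈ B, γ < ξ ∧ ξ < α) :
    ∃ S : Set Ordinal.{u}, S ⊆ B ∧ IsLadderAt α S := by
  obtain ⟨g, hg1, hg2⟩ := exists_cofinal_seq h
  have next : ∀ γ : {x : Ordinal.{u} // x < α}, {x : Ordinal.{u} // x ∈ B ∧ γ.1 < x ∧ x < α} :=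
    fun γ => ⟨(hB γ.1 γ.2).choose, (hB γ.1 γ.2).choose_spec.1, (hB γ.1 γ.2).choose_spec.2⟩
  let F : ℕ → {x : Ordinal.{u} // x ∈ B ∧ x < α} := fun n =>
    Nat.rec (motive := fun _ => {x : Ordinal.{u} // x ∈ B ∧ x < α})
      (let c := next ⟨g 0, hg1 0⟩; ⟨c.1, c.2.1, c.2.2.2⟩)
      (fun n p =>
        let c := next ⟨max p.1 (g (n+1)), max_lt p.2.2 (hg1 (n+1))⟩; ⟨c.1, c.2.1, c.2.2.2⟩) n
  have hF0 : g 0 < (F 0).1 := (next ⟨g 0, hg1 0⟩).2.2.1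
  have hFs : ∀ n, max (F n).1 (g (n+1)) < (F (n+1)).1 := fun n =>
    (next ⟨max (F n).1 (g (n+1)), max_lt (F n).2.2 (hg1 (n+1))⟩).2.2.1
  have hmono : StrictMono fun n => (F n).1 :=
    strictMono_nat_of_lt_succ fun n => (le_max_left _ _).trans_lt (hFs n)
  have hgF : ∀ n, g n < (F n).1 := by
    intro n
    cases n with
    | zero => exact hF0
    | succ m => exact (le_max_right _ _).trans_lt (hFs m)
  refine ⟨Set.range fun n => (F n).1, ?_, fun n => (F n).1, hmono, rfl, fun n => (F n).2.2, ?_⟩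
  · rintro x ⟨n, rfl⟩; exact (F n).2.1
  · intro γ hγ
    obtain ⟨n, hn⟩ := hg2 γ hγ
    exact ⟨n, hn.trans_lt (hgF n)⟩

lemma sup_lt_omega2 {f : ℕ → Ordinal.{u}} (h : ∀ n, f n < (Cardinal.aleph 2).ord) :
    (⨆ n, f n) < (Cardinal.aleph 2).ord := by
  apply Ordinal.iSup_lt_ord_lift _ h
  have hreg : (Cardinal.aleph 2).IsRegular := by
    have := Cardinal.isRegular_aleph_succ (1 : Ordinal)
    rwa [show Order.succ (1 : Ordinal) = 2 by simp [Order.succ_eq_add_one, one_add_one_eq_two]]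
      at this
  rw [hreg.cof_eq, Cardinal.mk_nat, Cardinal.lift_aleph0]
  rw [← Cardinal.aleph_zero]
  exact Cardinal.aleph_lt_aleph.2 (by norm_num)

lemma le_sup_nat (f : ℕ → Ordinal.{u}) (n : ℕ) : f n ≤ ⨆ n, f n :=
  Ordinal.le_iSup f n

lemma club_inter {C D : Set Ordinal.{u}}
    (hC : IsClubIn C (Cardinal.aleph 2).ord) (hD : IsClubIn D (Cardinal.aleph 2).ord) :
    IsClubIn (C ∩ D) (Cardinal.aleph 2).ord := by
  set o := (Cardinal.aleph 2).ord with ho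
  refine ⟨fun x hx => hC.1 hx.1, ?_, ?_⟩
  · intro β hβ hacc
    constructor
    · refine hC.2.1 β hβ ⟨hacc.1, fun γ hγ => ?_⟩
      obtain ⟨δ, hδ, h1, h2⟩ := hacc.2 γ hγ
      exact ⟨δ, hδ.1, h1, h2⟩
    · refine hD.2.1 β hβ ⟨hacc.1, fun γ hγ => ?_⟩
      obtain ⟨δ, hδ, h1, h2⟩ := hacc.2 γ hγ
      exact ⟨δ, hδ.2, h1, h2⟩
  · intro γ hγ
    have step : ∀ x : {x : Ordinal.{u} // x < o},
        {y : Ordinal.{u} // y < o ∧ y ∈ D ∧ ∃ c ∈ C, x.1 < c ∧ c < y} := by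
      intro x
      have h1 := hC.2.2 x.1 x.2
      have hc1 : h1.choose ∈ C := h1.choose_spec.1
      have hc2 : x.1 < h1.choose := h1.choose_spec.2
      have h2 := hD.2.2 h1.choose (hC.1 hc1)
      exact ⟨h2.choose, hD.1 h2.choose_spec.1, h2.choose_spec.1,
        h1.choose, hc1, hc2, h2.choose_spec.2⟩
    let u : ℕ → {x : Ordinal.{u} // x < o} := fun n =>
      Nat.rec (motive := fun _ => {x : Ordinal.{u} // x < o}) ⟨γ, hγ⟩
        (fun _ p => ⟨(step p).1, (step p).2.1⟩) n
    have key : ∀ n, (u (n+1)).1 ∈ D ∧ ∃ c ∈ C, (u n).1 < c ∧ c < (u (n+1)).1 :=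
      fun n => ⟨(step (u n)).2.2.1, (step (u n)).2.2.2⟩
    have humono : StrictMono fun n => (u n).1 := by
      apply strictMono_nat_of_lt_succ
      intro n
      obtain ⟨_, c, _, h1, h2⟩ := key n
      exact h1.trans h2
    set β := ⨆ n, (u n).1 with hβdef
    have hβo : β < o := sup_lt_omega2 (fun n => (u n).2)
    have hle : ∀ n, (u n).1 ≤ β := fun n => by rw [hβdef]; exact Ordinal.le_iSup (fun k => (u k).1) n
    have hlt : ∀ n, (u n).1 < β :=
      fun n => lt_of_lt_of_le (humono (Nat.lt_succ_self n)) (hle (n+1))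
    have hne : β ≠ 0 := fun h => by simpa [h] using (zero_le (a := (u 0).1)).trans_lt (hlt 0)
    have hexn : ∀ γ' < β, ∃ n, γ' < (u n).1 := fun γ' h => Ordinal.lt_iSup_iff.1 h
    have hβC : β ∈ C := by
      refine hC.2.1 β hβo ⟨hne, fun γ' hγ' => ?_⟩
      obtain ⟨n, hn⟩ := hexn γ' hγ'
      obtain ⟨_, c, hcC, h1, h2⟩ := key n
      exact ⟨c, hcC, hn.trans h1, h2.trans_le (hle (n+1))⟩
    have hβD : β ∈ D := by
      refine hD.2.1 β hβo ⟨hne, fun γ' hγ' => ?_⟩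
      obtain ⟨n, hn⟩ := hexn γ' hγ'
      exact ⟨(u (n+1)).1, (key n).1, hn.trans (humono n.lt_succ_self), hlt (n+1)⟩
    exact ⟨β, ⟨hβC, hβD⟩, hlt 0⟩

lemma accSet_club {X : Set Ordinal.{u}} (hX : X ⊆ Set.Iio (Cardinal.aleph 2).ord)
    (hXu : ∀ γ < (Cardinal.aleph 2).ord, ∃ ξ ∈ X, γ < ξ) :
    IsClubIn {β | β < (Cardinal.aleph 2).ord ∧ ∀ γ < β, ∃ ξ ∈ X, γ < ξ ∧ ξ < β}
      (Cardinal.aleph 2).ord := by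
  set o := (Cardinal.aleph 2).ord with ho
  refine ⟨fun x hx => hx.1, ?_, ?_⟩
  · intro β hβ hacc
    refine ⟨hβ, fun γ hγ => ?_⟩
    obtain ⟨δ, hδ, h1, h2⟩ := hacc.2 γ hγ
    obtain ⟨ξ, hξ, h3, h4⟩ := hδ.2 γ h1
    exact ⟨ξ, hξ, h3, h4.trans h2⟩
  · intro γ hγ
    have step : ∀ x : {x : Ordinal.{u} // x < o},
        {y : Ordinal.{u} // y < o ∧ y ∈ X ∧ x.1 < y} := by
      intro x
      have h1 := hXu x.1 x.2
      exact ⟨h1.choose, hX h1.choose_spec.1, h1.choose_spec.1, h1.choose_spec.2⟩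
    let u : ℕ → {x : Ordinal.{u} // x < o} := fun n =>
      Nat.rec (motive := fun _ => {x : Ordinal.{u} // x < o}) ⟨γ, hγ⟩
        (fun _ p => ⟨(step p).1, (step p).2.1⟩) n
    have key : ∀ n, (u (n+1)).1 ∈ X ∧ (u n).1 < (u (n+1)).1 :=
      fun n => ⟨(step (u n)).2.2.1, (step (u n)).2.2.2⟩
    have humono : StrictMono fun n => (u n).1 :=
      strictMono_nat_of_lt_succ fun n => (key n).2
    set β := ⨆ n, (u n).1 with hβdef
    have hβo : β < o := sup_lt_omega2 (fun n => (u n).2)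
    have hle : ∀ n, (u n).1 ≤ β := fun n => by rw [hβdef]; exact Ordinal.le_iSup (fun k => (u k).1) n
    have hlt : ∀ n, (u n).1 < β :=
      fun n => lt_of_lt_of_le (humono (Nat.lt_succ_self n)) (hle (n+1))
    refine ⟨β, ⟨hβo, fun γ' hγ' => ?_⟩, hlt 0⟩
    obtain ⟨n, hn⟩ := Ordinal.lt_iSup_iff.1 hγ'
    exact ⟨(u (n+1)).1, (key n).1, hn.trans (key n).2, hlt (n+1)⟩

/-- `◊(E)` for `E = {α < ω₂ : cf α = ω}` yields a ladder system
`⟨S_α : α ∈ E⟩` (each `S_α` of order type `ω` cofinal in `α`) such that for every unbounded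
`X ⊆ ω₂` the set `{α ∈ E : S_α ⊆ X}` is stationary in `ω₂`. -/
theorem statement11
    (hdiamond : ∃ A : Ordinal.{u} → Set Ordinal.{u},
      (∀ α ∈ Etwo.{u}, A α ⊆ Set.Iio α) ∧
      ∀ S : Set Ordinal.{u}, S ⊆ Set.Iio (Cardinal.aleph 2).ord →
        ∀ D : Set Ordinal.{u}, IsClubIn D (Cardinal.aleph 2).ord →
          ∃ α ∈ D, α ∈ Etwo.{u} ∧ S ∩ Set.Iio α = A α) :
    ∃ S : Ordinal.{u} → Set Ordinal.{u},
      (∀ α ∈ Etwo.{u}, IsLadderAt α (S α)) ∧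
      ∀ X : Set Ordinal.{u}, X ⊆ Set.Iio (Cardinal.aleph 2).ord →
        (∀ γ < (Cardinal.aleph 2).ord, ∃ ξ ∈ X, γ < ξ) →
        ∀ D : Set Ordinal.{u}, IsClubIn D (Cardinal.aleph 2).ord →
          ∃ α ∈ D, α ∈ Etwo.{u} ∧ S α ⊆ X := by
  obtain ⟨A, hA1, hA2⟩ := hdiamond
  classical
  have hdef : ∀ α, α ∈ Etwo.{u} →
      ∃ T : Set Ordinal.{u}, T ⊆ (Set.univ : Set Ordinal.{u}) ∧ IsLadderAt α T := by
    intro α hα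
    have hlim : Order.IsSuccLimit α := Ordinal.aleph0_le_cof.1 (le_of_eq hα.2.symm)
    exact exists_ladder_subset hα.2
      (fun γ hγ => ⟨Order.succ γ, trivial, Order.lt_succ γ, hlim.succ_lt hγ⟩)
  refine ⟨fun α =>
    if h : α ∈ Etwo.{u} ∧ ∀ γ < α, ∃ ξ ∈ A α, γ < ξ ∧ ξ < α then
      (exists_ladder_subset h.1.2 h.2).choose
    else if h2 : α ∈ Etwo.{u} then (hdef α h2).choose else ∅, ?_, ?_⟩
  · intro α hα
    by_cases h : α ∈ Etwo.{u} ∧ ∀ γ < α, ∃ ξ ∈ A α, γ < ξ ∧ ξ < α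
    · beta_reduce; rw [dif_pos h]
      exact (exists_ladder_subset h.1.2 h.2).choose_spec.2
    · beta_reduce; rw [dif_neg h, dif_pos hα]
      exact (hdef α hα).choose_spec.2
  · intro X hX hXu D hD
    have hclub := club_inter hD (accSet_club hX hXu)
    obtain ⟨α, hαD', hαE, hAα⟩ := hA2 X hX _ hclub
    have hαacc := hαD'.2
    have hP : α ∈ Etwo.{u} ∧ ∀ γ < α, ∃ ξ ∈ A α, γ < ξ ∧ ξ < α := by
      refine ⟨hαE, fun γ hγ => ?_⟩
      obtain ⟨ξ, hξX, h1, h2⟩ := hαacc.2 γ hγ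
      have hmem : ξ ∈ A α := by rw [← hAα]; exact ⟨hξX, h2⟩
      exact ⟨ξ, hmem, h1, h2⟩
    refine ⟨α, hαD'.1, hαE, ?_⟩
    beta_reduce; rw [dif_pos hP]
    intro x hx
    have hmem := (exists_ladder_subset hP.1.2 hP.2).choose_spec.1 hx
    rw [← hAα] at hmem
    exact hmem.1
end
end

section
/- Let ⟨S_α : α ∈ E⟩, E = {α < ω₂ : cf(α) = ω}, be a ladder system (each S_α ⊆ α of order type ω with sup S_α = α) such that for every unbounded X ⊆ ω₂ the set {α ∈ E : S_α ⊆ X} is stationary in ω₂. Then in the ladder topology on ω₂ + 1, the point ω₂ is not a Gδ point; equivalently, ω₂ belongs to the closure of the set ω₂ (all points below ω₂) in the Gδ-modification of the ladder topology. -/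
open Set Filter Topology

universe u v

noncomputable section

private lemma aleph2_regular : Cardinal.IsRegular (Cardinal.aleph 2) := by
  have h : (2 : Ordinal) = Order.succ 1 := by
    rw [Order.succ_eq_add_one, one_add_one_eq_two]
  rw [h]
  exact Cardinal.isRegular_aleph_succ 1

private lemma ladder_nhds_mem (S : Ordinal.{u} → Set Ordinal.{u})
    {U : Set {β : Ordinal.{u} // β ≤ (Cardinal.aleph 2).ord}}
    (hU : U ∈ @nhds _ (ladderTop (Cardinal.aleph 2).ord Etwo.{u} S)
      ⟨(Cardinal.aleph 2).ord, le_rfl⟩) :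
    ∃ F : Ordinal.{u} → Set Ordinal.{u}, (∀ α ∈ Etwo.{u}, (F α).Finite) ∧
      ladderBase (Cardinal.aleph 2).ord Etwo.{u} S F ⊆ U := by
  rw [ladderTop, nhds_nhdsAdjoint_same, Filter.mem_sup] at hU
  have h2 := hU.2
  have hdir : DirectedOn
      ((fun F => Filter.principal (ladderBase (Cardinal.aleph 2).ord Etwo.{u} S F)) ⁻¹'o (· ≥ ·))
      {F : Ordinal.{u} → Set Ordinal.{u} | ∀ α ∈ Etwo.{u}, (F α).Finite} := by
    rintro F hF G hG
    refine ⟨fun α => F α ∪ G α, fun α hα => (hF α hα).union (hG α hα), ?_, ?_⟩ <;>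
    · refine Filter.principal_mono.2 ?_
      rintro x (hx | ⟨α, hα, h1, h2⟩)
      · exact Or.inl hx
      · exact Or.inr ⟨α, hα, h1, fun h => h2 (by simp [h])⟩
  rw [Filter.mem_biInf_of_directed hdir ⟨fun _ => ∅, fun α _ => Set.finite_empty⟩] at h2
  obtain ⟨F, hF, hFU⟩ := h2
  exact ⟨F, hF, hFU⟩

private lemma ladder_key (S : Ordinal.{u} → Set Ordinal.{u})
    (hS : ∀ α ∈ Etwo.{u}, IsLadderAt α (S α))
    (hstat : ∀ X : Set Ordinal.{u}, X ⊆ Set.Iio (Cardinal.aleph 2).ord →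
      (∀ γ < (Cardinal.aleph 2).ord, ∃ ξ ∈ X, γ < ξ) →
      ∀ D : Set Ordinal.{u}, IsClubIn D (Cardinal.aleph 2).ord →
        ∃ α ∈ D, α ∈ Etwo.{u} ∧ S α ⊆ X)
    (U : ℕ → Set {β : Ordinal.{u} // β ≤ (Cardinal.aleph 2).ord})
    (hmem : ∀ n, U n ∈ @nhds _ (ladderTop (Cardinal.aleph 2).ord Etwo.{u} S)
      ⟨(Cardinal.aleph 2).ord, le_rfl⟩) :
    ∃ x : {β : Ordinal.{u} // β ≤ (Cardinal.aleph 2).ord},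
      x.1 < (Cardinal.aleph 2).ord ∧ ∀ n, x ∈ U n := by
  have holim : Order.IsSuccLimit (Cardinal.aleph 2).ord :=
    Cardinal.isSuccLimit_ord (Cardinal.aleph0_le_aleph 2)
  choose F hFfin hFsub using fun n => ladder_nhds_mem S (hmem n)
  by_contra hcon
  push_neg at hcon
  -- find n such that the complement of U n is unbounded
  have hex : ∃ n : ℕ, ∀ γ < (Cardinal.aleph 2).ord,
      ∃ x : {β : Ordinal.{u} // β ≤ (Cardinal.aleph 2).ord},
        x.1 < (Cardinal.aleph 2).ord ∧ γ < x.1 ∧ x ∉ U n := by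
    by_contra h
    push_neg at h
    choose γ hγo hγ using h
    have hsup : (⨆ n, γ n) < (Cardinal.aleph 2).ord := by
      refine Ordinal.iSup_lt_ord_lift ?_ hγo
      rw [aleph2_regular.cof_eq, Cardinal.mk_nat, Cardinal.lift_aleph0, ← Cardinal.aleph_zero]
      exact Cardinal.aleph_lt_aleph.2 (by norm_num)
    have hξ : (⨆ n, γ n) + 1 < (Cardinal.aleph 2).ord := by
      rw [Ordinal.add_one_eq_succ]; exact holim.succ_lt hsup
    obtain ⟨n, hn⟩ := hcon ⟨(⨆ n, γ n) + 1, hξ.le⟩ hξ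
    refine hn (hγ n ⟨(⨆ n, γ n) + 1, hξ.le⟩ hξ ?_)
    show γ n < (⨆ n, γ n) + 1
    calc γ n ≤ ⨆ n, γ n := Ordinal.le_iSup γ n
      _ < (⨆ n, γ n) + 1 := by rw [Ordinal.add_one_eq_succ]; exact Order.lt_succ _
  obtain ⟨n, hn⟩ := hex
  set X : Set Ordinal.{u} :=
    {ξ | ∃ h : ξ ≤ (Cardinal.aleph 2).ord,
      ξ < (Cardinal.aleph 2).ord ∧ (⟨ξ, h⟩ : {β // β ≤ (Cardinal.aleph 2).ord}) ∉ U n} with hX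
  have hXsub : X ⊆ Set.Iio (Cardinal.aleph 2).ord := by
    rintro ξ ⟨h, hξ, _⟩; exact hξ
  have hXunb : ∀ γ < (Cardinal.aleph 2).ord, ∃ ξ ∈ X, γ < ξ := by
    intro γ hγ
    obtain ⟨x, hx1, hx2, hx3⟩ := hn γ hγ
    exact ⟨x.1, ⟨x.2, hx1, by simpa using hx3⟩, hx2⟩
  have hclub : IsClubIn (Set.Iio (Cardinal.aleph 2).ord) (Cardinal.aleph 2).ord :=
    ⟨fun _ h => h, fun β hβ _ => hβ, fun γ hγ =>
      ⟨γ + 1, Ordinal.add_one_eq_succ γ ▸ holim.succ_lt hγ,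
        Ordinal.add_one_eq_succ γ ▸ Order.lt_succ γ⟩⟩
  obtain ⟨α, hαo, hαE, hSX⟩ := hstat X hXsub hXunb _ hclub
  obtain ⟨f, hfmono, hfrange, hflt, -⟩ := hS α hαE
  have hsub : Set.range f ⊆ F n α := by
    rintro ξ ⟨k, rfl⟩
    have hξS : f k ∈ S α := by rw [hfrange]; exact ⟨k, rfl⟩
    obtain ⟨hle, hlt, hnotU⟩ := hSX hξS
    by_contra hnF
    exact hnotU (hFsub n (Or.inr ⟨α, hαE, hξS, hnF⟩))
  exact Set.infinite_range_of_injective hfmono.injective ((hFfin n α hαE).subset hsub)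

private lemma exists_gdelta_subset {X : Type v} {t : TopologicalSpace X} {U : Set X} {x : X}
    (hU : TopologicalSpace.GenerateOpen {s : Set X | @IsGδ X t s} U) (hx : x ∈ U) :
    ∃ G : Set X, @IsGδ X t G ∧ x ∈ G ∧ G ⊆ U := by
  induction hU with
  | basic s hs => exact ⟨s, hs, hx, subset_rfl⟩
  | univ => exact ⟨Set.univ, @IsGδ.univ X t, trivial, subset_rfl⟩
  | inter s t' hs ht ihs iht =>
    obtain ⟨G1, h1, hx1, hsub1⟩ := ihs hx.1
    obtain ⟨G2, h2, hx2, hsub2⟩ := iht hx.2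
    exact ⟨G1 ∩ G2, h1.inter h2, ⟨hx1, hx2⟩, Set.inter_subset_inter hsub1 hsub2⟩
  | sUnion T hT ih =>
    obtain ⟨s, hsT, hxs⟩ := hx
    obtain ⟨G, hG, hxG, hsub⟩ := ih s hsT hxs
    exact ⟨G, hG, hxG, hsub.trans (Set.subset_sUnion_of_mem hsT)⟩

private lemma gdelta_meets (S : Ordinal.{u} → Set Ordinal.{u})
    (hS : ∀ α ∈ Etwo.{u}, IsLadderAt α (S α))
    (hstat : ∀ X : Set Ordinal.{u}, X ⊆ Set.Iio (Cardinal.aleph 2).ord →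
      (∀ γ < (Cardinal.aleph 2).ord, ∃ ξ ∈ X, γ < ξ) →
      ∀ D : Set Ordinal.{u}, IsClubIn D (Cardinal.aleph 2).ord →
        ∃ α ∈ D, α ∈ Etwo.{u} ∧ S α ⊆ X)
    {G : Set {β : Ordinal.{u} // β ≤ (Cardinal.aleph 2).ord}}
    (hG : @IsGδ _ (ladderTop (Cardinal.aleph 2).ord Etwo.{u} S) G)
    (htop : (⟨(Cardinal.aleph 2).ord, le_rfl⟩ :
      {β : Ordinal.{u} // β ≤ (Cardinal.aleph 2).ord}) ∈ G) :
    ∃ x : {β : Ordinal.{u} // β ≤ (Cardinal.aleph 2).ord},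
      x.1 < (Cardinal.aleph 2).ord ∧ x ∈ G := by
  letI := ladderTop (Cardinal.aleph 2).ord Etwo.{u} S
  obtain ⟨T, hTopen, hTcount, rfl⟩ := hG
  rcases Set.eq_empty_or_nonempty T with rfl | hne
  · refine ⟨⟨0, (zero_le (a := _))⟩, ?_, by simp⟩
    exact (Cardinal.isSuccLimit_ord (Cardinal.aleph0_le_aleph 2)).pos
  obtain ⟨g, rfl⟩ := hTcount.exists_eq_range hne
  have hmem : ∀ m : ℕ, g m ∈ @nhds _ (ladderTop (Cardinal.aleph 2).ord Etwo.{u} S)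
      ⟨(Cardinal.aleph 2).ord, le_rfl⟩ := fun m =>
    (hTopen _ ⟨m, rfl⟩).mem_nhds (htop _ ⟨m, rfl⟩)
  obtain ⟨x, hx1, hx2⟩ := ladder_key S hS hstat g hmem
  exact ⟨x, hx1, fun s ⟨m, hm⟩ => hm ▸ hx2 m⟩

/-- if `⟨S_α : α ∈ E⟩` is a ladder system on `E = {α < ω₂ : cf α = ω}` such
that for every unbounded `X ⊆ ω₂` the set `{α ∈ E : S_α ⊆ X}` is stationary, then in the
ladder topology on `ω₂ + 1` the point `ω₂` is not a Gδ point; equivalently it lies in the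
closure of the set of points below `ω₂` in the Gδ-modification. -/
theorem statement12 (S : Ordinal.{u} → Set Ordinal.{u})
    (hS : ∀ α ∈ Etwo.{u}, IsLadderAt α (S α))
    (hstat : ∀ X : Set Ordinal.{u}, X ⊆ Set.Iio (Cardinal.aleph 2).ord →
      (∀ γ < (Cardinal.aleph 2).ord, ∃ ξ ∈ X, γ < ξ) →
      ∀ D : Set Ordinal.{u}, IsClubIn D (Cardinal.aleph 2).ord →
        ∃ α ∈ D, α ∈ Etwo.{u} ∧ S α ⊆ X) :
    ¬ @IsGδ _ (ladderTop (Cardinal.aleph 2).ord Etwo.{u} S)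
        ({⟨(Cardinal.aleph 2).ord, le_rfl⟩} :
          Set {β : Ordinal.{u} // β ≤ (Cardinal.aleph 2).ord}) ∧
    (⟨(Cardinal.aleph 2).ord, le_rfl⟩ :
        {β : Ordinal.{u} // β ≤ (Cardinal.aleph 2).ord}) ∈
      @closure _ (gdeltaMod (ladderTop (Cardinal.aleph 2).ord Etwo.{u} S))
        {x : {β : Ordinal.{u} // β ≤ (Cardinal.aleph 2).ord} |
          x.1 < (Cardinal.aleph 2).ord} := by
  constructor
  · rintro hGδ
    obtain ⟨x, hx1, hx2⟩ := gdelta_meets S hS hstat hGδ (Set.mem_singleton _)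
    rw [Set.mem_singleton_iff] at hx2
    rw [hx2] at hx1
    exact lt_irrefl _ hx1
  · letI tδ := gdeltaMod (ladderTop (Cardinal.aleph 2).ord Etwo.{u} S)
    rw [mem_closure_iff]
    intro V hV hxV
    have hV' : TopologicalSpace.GenerateOpen
        {s : Set {β : Ordinal.{u} // β ≤ (Cardinal.aleph 2).ord} |
          @IsGδ _ (ladderTop (Cardinal.aleph 2).ord Etwo.{u} S) s} V := hV
    obtain ⟨G, hG, hxG, hGV⟩ := exists_gdelta_subset hV' hxV
    obtain ⟨x, hx1, hx2⟩ := gdelta_meets S hS hstat hG hxG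
    exact ⟨x, hGV hx2, hx1⟩
end
end

section
/- Assume ladder system uniformization on ω₁. Let γ < ω₂ and suppose for each limit ordinal α < γ of cofinality ω a set S_α ⊆ α of order type ω with sup S_α = α is given. Then there is a function F : γ → ω such that F restricted to S_α is finite-to-one for every such α < γ. -/
open Set Filter Topology

universe u v

noncomputable section

/-- Ladder system uniformization on `ω₁`: every family of colorings of a ladder system on
the limit ordinals below `ω₁` can be uniformized. -/
def LadderUniformization : Prop :=
  ∀ S : Ordinal.{u} → Set Ordinal.{u},
    (∀ α < (Cardinal.aleph 1).ord, Order.IsSuccLimit α → IsLadderAt α (S α)) →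
    ∀ g : Ordinal.{u} → Ordinal.{u} → ℕ,
      ∃ f : Ordinal.{u} → ℕ,
        ∀ α < (Cardinal.aleph 1).ord, Order.IsSuccLimit α →
          {ξ : Ordinal.{u} | ξ ∈ S α ∧ f ξ ≠ g α ξ}.Finite

namespace St14

/-- `F` has finite level sets on `T`. -/
def FinLevel (F : Ordinal.{u} → ℕ) (T : Set Ordinal.{u}) : Prop :=
  ∀ k : ℕ, {ξ : Ordinal.{u} | ξ ∈ T ∧ F ξ = k}.Finite

theorem finLevel_mono {F : Ordinal.{u} → ℕ} {T T' : Set Ordinal.{u}} (h : T' ⊆ T)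
    (hF : FinLevel F T) : FinLevel F T' := fun k =>
  (hF k).subset fun ξ hξ => ⟨h hξ.1, hξ.2⟩

theorem finLevel_union {F : Ordinal.{u} → ℕ} {T T' : Set Ordinal.{u}}
    (hF : FinLevel F T) (hF' : FinLevel F T') : FinLevel F (T ∪ T') := fun k =>
  ((hF k).union (hF' k)).subset fun ξ hξ => by
    rcases hξ.1 with h | h
    · exact Or.inl ⟨h, hξ.2⟩
    · exact Or.inr ⟨h, hξ.2⟩

theorem finLevel_of_finite {F : Ordinal.{u} → ℕ} {T : Set Ordinal.{u}} (h : T.Finite) :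
    FinLevel F T := fun _ => h.subset fun _ hξ => hξ.1

theorem finLevel_of_le {F F' : Ordinal.{u} → ℕ} {T : Set Ordinal.{u}}
    (hle : ∀ ξ ∈ T, F ξ ≤ F' ξ) (hF : FinLevel F T) : FinLevel F' T := by
  intro k
  have : {ξ : Ordinal.{u} | ξ ∈ T ∧ F' ξ = k} ⊆
      ⋃ j ∈ Finset.range (k + 1), {ξ : Ordinal.{u} | ξ ∈ T ∧ F ξ = j} := by
    intro ξ hξ
    have h1 : F ξ ≤ k := hξ.2 ▸ hle ξ hξ.1
    exact Set.mem_biUnion (Finset.mem_range.2 (Nat.lt_succ_of_le h1)) ⟨hξ.1, rfl⟩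
  exact (Set.Finite.biUnion (Finset.range (k+1)).finite_toSet fun j _ => hF j).subset this

/-- A strictly increasing ℕ-sequence has finitely many terms below any value it passes. -/
theorem finite_index_lt {f : ℕ → Ordinal.{u}} (hf : StrictMono f) {δ : Ordinal.{u}}
    (h : ∃ n, δ ≤ f n) : {n : ℕ | f n < δ}.Finite := by
  obtain ⟨n₀, hn₀⟩ := h
  apply (Set.finite_Iio n₀).subset
  intro n hn
  by_contra hc
  exact absurd (lt_of_lt_of_le hn hn₀) (not_lt.2 (hf.monotone (not_lt.1 hc)))

theorem ladder_subset {α : Ordinal.{u}} {S : Set Ordinal.{u}} (h : IsLadderAt α S) :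
    ∀ ξ ∈ S, ξ < α := by
  obtain ⟨f, hf, rfl, hb, _⟩ := h
  rintro ξ ⟨n, rfl⟩
  exact hb n

/-- A ladder at `α` meets every proper initial segment of `α` in a finite set. -/
theorem ladder_inter_finite {α δ : Ordinal.{u}} {S : Set Ordinal.{u}} (h : IsLadderAt α S)
    (hδ : δ < α) : {ξ : Ordinal.{u} | ξ ∈ S ∧ ξ < δ}.Finite := by
  obtain ⟨f, hf, rfl, hb, hc⟩ := h
  obtain ⟨n₀, hn₀⟩ := hc δ hδ
  have : {ξ : Ordinal.{u} | ξ ∈ Set.range f ∧ ξ < δ} ⊆ f '' {n | f n < δ} := by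
    rintro ξ ⟨⟨n, rfl⟩, hlt⟩
    exact ⟨n, hlt, rfl⟩
  exact ((finite_index_lt hf ⟨n₀, hn₀.le⟩).image f).subset this

end St14

namespace St14

/-- From `cof λ = ℵ₀` extract a strictly increasing cofinal ω-sequence (starting at 0). -/
theorem exists_omega_seq {l : Ordinal.{u}} (hl : Order.IsSuccLimit l) (hc : l.cof = Cardinal.aleph0) :
    ∃ f : ℕ → Ordinal.{u}, StrictMono f ∧ f 0 = 0 ∧ (∀ n, f n < l) ∧ ∀ β < l, ∃ n, β < f n := by
  obtain ⟨ι, g, hg, hmk⟩ := Ordinal.exists_lsub_cof l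
  rw [hc] at hmk
  haveI hcnt : Countable ι := Cardinal.mk_le_aleph0_iff.1 hmk.le
  haveI hne : Nonempty ι := by
    rw [← Cardinal.mk_ne_zero_iff, hmk]; exact Cardinal.aleph0_ne_zero
  obtain ⟨e, he⟩ := exists_surjective_nat ι
  set s : ℕ → Ordinal.{u} := fun n => g (e n) with hs
  have hslt : ∀ n, s n < l := by
    intro n; rw [← hg]; exact Ordinal.lt_lsub _ _
  have hscov : ∀ β < l, ∃ n, β ≤ s n := by
    intro β hβ
    rw [← hg] at hβ
    obtain ⟨i, hi⟩ := Ordinal.lt_lsub_iff.1 hβ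
    obtain ⟨n, rfl⟩ := he i
    exact ⟨n, hi⟩
  -- recursive sequence
  set f : ℕ → Ordinal.{u} := fun n => Nat.rec 0 (fun n fn => max fn (s n) + 1) n with hf
  have hstep : ∀ n, f (n + 1) = max (f n) (s n) + 1 := fun n => rfl
  have hmono : StrictMono f := by
    apply strictMono_nat_of_lt_succ
    intro n
    rw [hstep]
    calc f n ≤ max (f n) (s n) := le_max_left _ _
    _ < max (f n) (s n) + 1 := by
        rw [Ordinal.add_one_eq_succ]; exact Order.lt_succ _
  have hlt : ∀ n, f n < l := by
    intro n
    induction n with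
    | zero => exact hl.pos
    | succ n ih =>
      rw [hstep, Ordinal.add_one_eq_succ]
      exact hl.succ_lt (max_lt ih (hslt n))
  refine ⟨f, hmono, rfl, hlt, fun β hβ => ?_⟩
  obtain ⟨n, hn⟩ := hscov β hβ
  refine ⟨n + 1, lt_of_le_of_lt hn ?_⟩
  rw [hstep]
  calc s n ≤ max (f n) (s n) := le_max_right _ _
  _ < max (f n) (s n) + 1 := by
      rw [Ordinal.add_one_eq_succ]; exact Order.lt_succ _

/-- Every countable limit ordinal carries a ladder. -/
theorem exists_ladder_countable {l : Ordinal.{u}} (hl : Order.IsSuccLimit l)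
    (hlt : l < (Cardinal.aleph 1).ord) : ∃ S, IsLadderAt l S := by
  have hcof : l.cof = Cardinal.aleph0 := by
    have h1 : Cardinal.aleph0 ≤ l.cof := Ordinal.aleph0_le_cof.2 hl
    have h2 : l.cof ≤ Cardinal.aleph0 := by
      have := Ordinal.cof_le_card l
      have hcard : l.card < Cardinal.aleph 1 := Cardinal.lt_ord.1 hlt
      rw [← Cardinal.succ_aleph0, Order.lt_succ_iff] at hcard
      exact this.trans hcard
    exact le_antisymm h2 h1
  obtain ⟨f, h1, _, h3, h4⟩ := exists_omega_seq hl hcof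
  exact ⟨Set.range f, f, h1, rfl, h3, h4⟩

end St14

namespace St14

open Classical in
/-- The range of a monotone cofinal ℕ-sequence below `l` is a ladder at `l`. -/
theorem ladder_of_monotone {l : Ordinal.{u}} {u : ℕ → Ordinal.{u}} (hm : Monotone u)
    (hb : ∀ n, u n < l) (hc : ∀ β < l, ∃ n, β < u n) : IsLadderAt l (Set.range u) := by
  have hex : ∀ m : ℕ, ∃ n, u m < u n := fun m => hc (u m) (hb m)
  -- strictly increasing sequence of indices, taking least jumps
  set N : ℕ → ℕ := fun k => Nat.rec 0 (fun _ Nk => Nat.find (hex Nk)) k with hN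
  have hN0 : N 0 = 0 := rfl
  have hNstep : ∀ k, N (k + 1) = Nat.find (hex (N k)) := fun k => rfl
  have hjump : ∀ k, u (N k) < u (N (k + 1)) := by
    intro k; rw [hNstep]; exact Nat.find_spec (hex (N k))
  have hleast : ∀ k n, n < N (k + 1) → ¬ u (N k) < u n := by
    intro k n hn; rw [hNstep] at hn; exact Nat.find_min (hex (N k)) hn
  have hNmono : StrictMono N := by
    apply strictMono_nat_of_lt_succ
    intro k
    by_contra hcon
    exact absurd (hjump k) (not_lt.2 (hm (not_lt.1 hcon)))
  have hsm : StrictMono (fun k => u (N k)) := strictMono_nat_of_lt_succ hjump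
  have hrange : Set.range u = Set.range (fun k => u (N k)) := by
    apply Set.Subset.antisymm
    · have key : ∀ n : ℕ, ∃ k, N k ≤ n ∧ n < N (k + 1) := by
        intro n
        induction n with
        | zero => exact ⟨0, le_of_eq hN0, hN0 ▸ hNmono (Nat.zero_lt_one)⟩
        | succ n ih =>
          obtain ⟨k, h1, h2⟩ := ih
          rcases lt_or_eq_of_le (Nat.succ_le_of_lt h2) with h3 | h3
          · exact ⟨k, h1.trans (Nat.le_succ n), h3⟩
          · exact ⟨k + 1, le_of_eq h3.symm, by rw [show n + 1 = N (k+1) from h3]; exact hNmono (Nat.lt_succ_self (k+1))⟩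
      rintro ξ ⟨n, rfl⟩
      obtain ⟨k, h1, h2⟩ := key n
      have : u n = u (N k) :=
        le_antisymm (not_lt.1 (hleast k n h2)) (hm h1)
      exact ⟨k, this.symm⟩
    · rintro ξ ⟨k, rfl⟩; exact ⟨N k, rfl⟩
  refine ⟨fun k => u (N k), hsm, hrange, fun k => hb _, fun β hβ => ?_⟩
  obtain ⟨n, hn⟩ := hc β hβ
  have : u n ∈ Set.range (fun k => u (N k)) := hrange ▸ ⟨n, rfl⟩
  obtain ⟨k, hk⟩ := this
  exact ⟨k, by rw [hk]; exact hn⟩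

end St14

namespace St14

/-- One can increase a coloring so that it becomes finite-to-one on one given ladder. -/
theorem exists_bump {α : Ordinal.{u}} {S : Set Ordinal.{u}} (h : IsLadderAt α S)
    (F : Ordinal.{u} → ℕ) : ∃ F' : Ordinal.{u} → ℕ, (∀ ξ, F ξ ≤ F' ξ) ∧ FinLevel F' S := by
  obtain ⟨f, hf, rfl, hb, hc⟩ := h
  classical
  set F' : Ordinal.{u} → ℕ := fun ξ =>
    if hξ : ξ ∈ Set.range f then max (F ξ) (Function.invFun f ξ) else F ξ with hF'
  refine ⟨F', fun ξ => ?_, fun k => ?_⟩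
  · rw [hF']; dsimp only
    by_cases hξ : ξ ∈ Set.range f
    · rw [dif_pos hξ]; exact le_max_left _ _
    · rw [dif_neg hξ]
  · have hsub : {ξ : Ordinal.{u} | ξ ∈ Set.range f ∧ F' ξ = k} ⊆ f '' Set.Iic k := by
      rintro ξ ⟨⟨n, rfl⟩, hk⟩
      have hinv : Function.invFun f (f n) = n :=
        Function.leftInverse_invFun hf.injective n
      have : F' (f n) = max (F (f n)) n := by
        rw [hF']; dsimp only
        split
        · rw [hinv]
        · exact absurd (Set.mem_range_self n) (by assumption)
      refine ⟨n, ?_, rfl⟩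
      have hn : n ≤ F' (f n) := by rw [this]; exact le_max_right _ _
      rw [hk] at hn
      exact hn
    exact ((Set.finite_Iic k).image f).subset hsub

end St14

namespace St14

set_option maxHeartbeats 1000000 in
theorem limit_case (hU : LadderUniformization.{u}) (γ : Ordinal.{u})
    (hγ2 : γ < (Cardinal.aleph 2).ord) (hlim : Order.IsSuccLimit γ)
    (S : Ordinal.{u} → Set Ordinal.{u})
    (hS : ∀ α < γ, Order.IsSuccLimit α → Ordinal.cof α = Cardinal.aleph0 → IsLadderAt α (S α))
    (IH : ∀ δ < γ, ∃ F : Ordinal.{u} → ℕ, ∀ α < δ, Order.IsSuccLimit α →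
      Ordinal.cof α = Cardinal.aleph0 → FinLevel F (S α)) :
    ∃ F : Ordinal.{u} → ℕ, ∀ α < γ, Order.IsSuccLimit α →
      Ordinal.cof α = Cardinal.aleph0 → FinLevel F (S α) := by
  classical
  set ω₁ : Ordinal.{u} := (Cardinal.aleph 1).ord with hω₁
  set Λ : Ordinal.{u} := γ.cof.ord with hΛ
  have hκ0 : Cardinal.aleph0 ≤ γ.cof := Ordinal.aleph0_le_cof.2 hlim
  have hΛlim : Order.IsSuccLimit Λ := Cardinal.isSuccLimit_ord hκ0
  have hΛω₁ : Λ ≤ ω₁ := by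
    apply Cardinal.ord_le_ord.2
    have h1 : γ.card < Cardinal.aleph 2 := Cardinal.lt_ord.1 hγ2
    have h2 : Cardinal.aleph 2 = Order.succ (Cardinal.aleph 1) := by
      rw [← Cardinal.aleph_succ]
      norm_num
    rw [h2, Order.lt_succ_iff] at h1
    exact (Ordinal.cof_le_card γ).trans h1
  -- a cofinal family indexed by ordinals below Λ
  obtain ⟨ι, g, hg, hmk⟩ := Ordinal.exists_lsub_cof γ
  have hmk2 : Cardinal.mk Λ.ToType = Cardinal.mk ι := by
    rw [Cardinal.mk_toType, hΛ, Cardinal.card_ord, hmk]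
  obtain ⟨e2⟩ := Cardinal.eq.1 hmk2
  set e1 := (Ordinal.ToType.mk (o := Λ)) with he1
  set s : Ordinal.{u} → Ordinal.{u} :=
    fun ν => if h : ν < Λ then g (e2 (e1 ⟨ν, h⟩)) else 0 with hs
  have hslt : ∀ ν, s ν < γ := by
    intro ν
    rw [hs]; dsimp only
    split
    · rw [← hg]; exact Ordinal.lt_lsub _ _
    · exact hlim.pos
  have hscov : ∀ β < γ, ∃ ν, ν < Λ ∧ β ≤ s ν := by
    intro β hβ
    rw [← hg] at hβ
    obtain ⟨i, hi⟩ := Ordinal.lt_lsub_iff.1 hβ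
    set x := e1.symm (e2.symm i) with hx
    refine ⟨x.1, x.2, ?_⟩
    have hsx : s x.1 = g (e2 (e1 ⟨x.1, x.2⟩)) := dif_pos x.2
    have heta : (⟨x.1, x.2⟩ : Set.Iio Λ) = x := Subtype.ext rfl
    rw [hsx, heta, hx]
    simpa using hi
  -- the continuous increasing cofinal sequence d
  set d : Ordinal.{u} → Ordinal.{u} := Ordinal.lt_wf.fix
    (fun ν ih => Ordinal.bsup.{u, u} ν (fun μ h => max (ih μ h) (s μ) + 1)) with hd
  have d_eq : ∀ ν, d ν = Ordinal.bsup.{u, u} ν (fun μ _ => max (d μ) (s μ) + 1) := by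
    intro ν
    rw [hd]
    exact WellFounded.fix_eq _ _ ν
  have dstep : ∀ μ ν, μ < ν → max (d μ) (s μ) + 1 ≤ d ν := by
    intro μ ν h
    rw [d_eq ν]
    exact Ordinal.le_bsup _ μ h
  have dmono : ∀ {μ ν}, μ < ν → d μ < d ν := by
    intro μ ν h
    refine lt_of_lt_of_le ?_ (dstep μ ν h)
    rw [Ordinal.add_one_eq_succ]
    exact (le_max_left _ _).trans_lt (Order.lt_succ _)
  have dSM : StrictMono d := fun _ _ h => dmono h
  have dscov : ∀ μ ν, μ < ν → s μ < d ν := by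
    intro μ ν h
    refine lt_of_lt_of_le ?_ (dstep μ ν h)
    rw [Ordinal.add_one_eq_succ]
    exact (le_max_right _ _).trans_lt (Order.lt_succ _)
  have dlt : ∀ ν, ν < Λ → d ν < γ := by
    intro ν
    induction ν using Ordinal.induction with
    | _ ν IH' =>
      intro hν
      rw [d_eq ν]
      apply Ordinal.bsup_lt_ord (Cardinal.lt_ord.1 hν)
      intro μ hμ
      have h1 : d μ < γ := IH' μ hμ (hμ.trans hν)
      have h2 : s μ < γ := hslt μ
      rw [Ordinal.add_one_eq_succ]
      exact hlim.succ_lt (max_lt h1 h2)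
  -- interval index
  set idx : Ordinal.{u} → Ordinal.{u} := fun ξ => sInf {ν | ξ < d (ν + 1)} with hidx
  have idx_wit : ∀ ξ, ξ < γ → ∃ ν, ν < Λ ∧ ξ < d (ν + 1) := by
    intro ξ hξ
    obtain ⟨ν, hν, hle⟩ := hscov ξ hξ
    refine ⟨ν, hν, lt_of_le_of_lt hle (dscov ν (ν + 1) ?_)⟩
    rw [Ordinal.add_one_eq_succ]; exact Order.lt_succ ν
  have idx_lt : ∀ ξ, ξ < γ → ξ < d (idx ξ + 1) := by
    intro ξ hξ
    obtain ⟨ν, _, hν2⟩ := idx_wit ξ hξ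
    exact csInf_mem (⟨ν, hν2⟩ : {ν | ξ < d (ν + 1)}.Nonempty)
  have idx_ltΛ : ∀ ξ, ξ < γ → idx ξ < Λ := by
    intro ξ hξ
    obtain ⟨ν, hν1, hν2⟩ := idx_wit ξ hξ
    exact lt_of_le_of_lt (csInf_le' hν2) hν1
  have idx_le : ∀ ξ, ξ < γ → d (idx ξ) ≤ ξ := by
    intro ξ hξ
    rw [d_eq]
    apply Ordinal.bsup_le
    intro μ hμ
    have h0 : μ ∉ {ν : Ordinal.{u} | ξ < d (ν + 1)} := notMem_of_lt_csInf' hμ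
    have h1 : ¬ ξ < d (μ + 1) := h0
    refine le_trans (dstep μ (μ + 1) ?_) (not_lt.1 h1)
    rw [Ordinal.add_one_eq_succ]; exact Order.lt_succ μ
  have idx_lt_of : ∀ ξ, ξ < γ → ∀ lam, ξ < d lam → idx ξ < lam := by
    intro ξ hξ lam h
    by_contra hc
    push_neg at hc
    exact absurd ((dSM.monotone hc).trans (idx_le ξ hξ)) (not_le.2 h)
  have idx_ge : ∀ ξ, ξ < γ → ∀ μ, d (μ + 1) ≤ ξ → μ < idx ξ := by
    intro ξ hξ μ h
    by_contra hc
    push_neg at hc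
    have h2 : d (idx ξ + 1) ≤ d (μ + 1) :=
      dSM.monotone (add_le_add_left hc 1)
    exact absurd ((idx_lt ξ hξ).trans_le (h2.trans h)) (lt_irrefl _)
  have idx_mono : ∀ ξ ξ', ξ ≤ ξ' → ξ' < γ → idx ξ ≤ idx ξ' :=
    fun ξ ξ' h h' => csInf_le' (lt_of_le_of_lt h (idx_lt ξ' h'))
  -- colorings on the intervals, from the inductive hypothesis
  set FF : Ordinal.{u} → Ordinal.{u} → ℕ :=
    fun ν => if h : d (ν + 1) + 1 < γ then Classical.choose (IH _ h) else fun _ => 0 with hFF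
  have FF_spec : ∀ ν, d (ν + 1) + 1 < γ → ∀ α < d (ν + 1) + 1, Order.IsSuccLimit α →
      Ordinal.cof α = Cardinal.aleph0 → FinLevel (FF ν) (S α) := by
    intro ν h
    rw [hFF]; dsimp only
    rw [dif_pos h]
    exact Classical.choose_spec (IH _ h)
  -- relevant limit indices and ladder enumerations
  set Rel : Ordinal.{u} → Prop := fun lam => Order.IsSuccLimit lam ∧ lam < Λ ∧ d lam < γ ∧
    Order.IsSuccLimit (d lam) ∧ (d lam).cof = Cardinal.aleph0 with hRel
  set en : Ordinal.{u} → ℕ → Ordinal.{u} := fun lam =>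
    if h : Rel lam then Classical.choose (hS (d lam) h.2.2.1 h.2.2.2.1 h.2.2.2.2)
    else fun _ => 0 with hen
  have en_spec : ∀ lam, Rel lam → StrictMono (en lam) ∧ S (d lam) = Set.range (en lam) ∧
      (∀ n, en lam n < d lam) ∧ ∀ β < d lam, ∃ n, β < en lam n := by
    intro lam h
    rw [hen]; dsimp only
    rw [dif_pos h]
    exact Classical.choose_spec (hS (d lam) h.2.2.1 h.2.2.2.1 h.2.2.2.2)
  set uu : Ordinal.{u} → ℕ → Ordinal.{u} := fun lam n => idx (en lam n) with huu
  have uu_facts : ∀ lam, Rel lam → Monotone (uu lam) ∧ (∀ n, uu lam n < lam) ∧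
      ∀ β < lam, ∃ n, β < uu lam n := by
    intro lam h
    obtain ⟨hsm, hrange, hb, hcof⟩ := en_spec lam h
    have henγ : ∀ n, en lam n < γ := fun n => (hb n).trans h.2.2.1
    refine ⟨fun m n hmn => idx_mono _ _ (hsm.monotone hmn) (henγ n),
      fun n => idx_lt_of _ (henγ n) lam (hb n), ?_⟩
    intro β hβ
    have h1 : β + 1 < lam := by
      rw [Ordinal.add_one_eq_succ]; exact h.1.succ_lt hβ
    obtain ⟨n, hn⟩ := hcof _ (dmono h1)
    exact ⟨n, idx_ge _ (henγ n) β hn.le⟩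
  -- the ladder system on ω₁ to be uniformized
  set T : Ordinal.{u} → Set Ordinal.{u} := fun lam =>
    if h : Rel lam then Set.range (uu lam)
    else if h2 : lam < ω₁ ∧ Order.IsSuccLimit lam then
      Classical.choose (exists_ladder_countable h2.2 h2.1)
    else ∅ with hT
  have hTladder : ∀ lam < ω₁, Order.IsSuccLimit lam → IsLadderAt lam (T lam) := by
    intro lam h1 h2
    rw [hT]; dsimp only
    by_cases h : Rel lam
    · rw [dif_pos h]
      obtain ⟨hm, hb, hc⟩ := uu_facts lam h
      exact ladder_of_monotone hm hb hc
    · rw [dif_neg h, dif_pos (⟨h1, h2⟩ : lam < ω₁ ∧ Order.IsSuccLimit lam)]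
      exact Classical.choose_spec (exists_ladder_countable h2 h1)
  set gc : Ordinal.{u} → Ordinal.{u} → ℕ := fun lam μ => sSup {n : ℕ | uu lam n = μ} with hgc
  obtain ⟨hcol, hh⟩ := hU T hTladder gc
  -- the final coloring
  set F : Ordinal.{u} → ℕ := fun ξ => max (FF (idx ξ) ξ) (hcol (idx ξ)) with hF
  -- Case A: ladders living inside one interval
  have caseA : ∀ α < γ, Order.IsSuccLimit α → Ordinal.cof α = Cardinal.aleph0 →
      ∀ ν < Λ, d ν < α → α ≤ d (ν + 1) → FinLevel F (S α) := by
    intro α hαγ hαl hαc ν hνΛ hd1 hd2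
    have hν1 : ν + 1 < Λ := by
      rw [Ordinal.add_one_eq_succ]; exact hΛlim.succ_lt hνΛ
    have hg1 : d (ν + 1) < γ := dlt _ hν1
    have hg2 : d (ν + 1) + 1 < γ := by
      rw [Ordinal.add_one_eq_succ]; exact hlim.succ_lt hg1
    have hFFα : FinLevel (FF ν) (S α) := by
      apply FF_spec ν hg2 α ?_ hαl hαc
      rw [Ordinal.add_one_eq_succ (d (ν+1))]
      exact Order.lt_succ_iff.2 hd2
    have hlad := hS α hαγ hαl hαc
    have hsplit : S α ⊆ {ξ | ξ ∈ S α ∧ ξ < d ν} ∪ {ξ | ξ ∈ S α ∧ idx ξ = ν} := by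
      intro ξ hξ
      have hξα : ξ < α := ladder_subset hlad ξ hξ
      by_cases hlt : ξ < d ν
      · exact Or.inl ⟨hξ, hlt⟩
      · right
        refine ⟨hξ, ?_⟩
        have hξγ : ξ < γ := hξα.trans hαγ
        have hge : ν ≤ idx ξ := by
          by_contra hc
          push_neg at hc
          have h2 : idx ξ + 1 ≤ ν := by
            rw [Ordinal.add_one_eq_succ]; exact Order.succ_le_iff.2 hc
          exact hlt ((idx_lt ξ hξγ).trans_le (dSM.monotone h2))
        have hle2 : idx ξ ≤ ν := by
          have h3 : idx ξ < ν + 1 := idx_lt_of ξ hξγ (ν + 1) (hξα.trans_le hd2)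
          rw [Ordinal.add_one_eq_succ] at h3
          exact Order.lt_succ_iff.1 h3
        exact le_antisymm hle2 hge
    apply finLevel_mono hsplit
    apply finLevel_union (finLevel_of_finite (ladder_inter_finite hlad hd1))
    apply finLevel_of_le (F := FF ν)
    · intro ξ hξ
      rw [hF]; dsimp only
      rw [hξ.2]
      exact le_max_left _ _
    · exact finLevel_mono (fun ξ hξ => hξ.1) hFFα
  -- Case B: ladders at limit points of the sequence d
  have caseB : ∀ α < γ, Order.IsSuccLimit α → Ordinal.cof α = Cardinal.aleph0 →
      ∀ lam, Order.IsSuccLimit lam → lam < Λ → α = d lam → FinLevel F (S α) := by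
    intro α hαγ hαl hαc lam hlaml hlamΛ hαd
    subst hαd
    have hrel : Rel lam := ⟨hlaml, hlamΛ, hαγ, hαl, hαc⟩
    obtain ⟨hsm, hrange, hb, hcof⟩ := en_spec lam hrel
    have henγ : ∀ n, en lam n < γ := fun n => (hb n).trans hαγ
    have hTlam : T lam = Set.range (uu lam) := by
      rw [hT]; dsimp only; rw [dif_pos hrel]
    have hlamω₁ : lam < ω₁ := hlamΛ.trans_le hΛω₁
    have hEx : {ζ | ζ ∈ T lam ∧ hcol ζ ≠ gc lam ζ}.Finite := hh lam hlamω₁ hlaml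
    intro k
    have hsub : {ξ | ξ ∈ S (d lam) ∧ F ξ = k} ⊆
        (⋃ ζ ∈ {ζ | ζ ∈ T lam ∧ hcol ζ ≠ gc lam ζ},
          {ξ | ξ ∈ S (d lam) ∧ ξ < d (ζ + 1)}) ∪ en lam '' Set.Iic k := by
      rintro ξ ⟨hξS, hξF⟩
      have hξα : ξ < d lam := ladder_subset (hS _ hαγ hαl hαc) ξ hξS
      have hξγ : ξ < γ := hξα.trans hαγ
      have hξr : ξ ∈ Set.range (en lam) := by rw [← hrange]; exact hξS
      obtain ⟨n, rfl⟩ := hξr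
      by_cases hne : hcol (uu lam n) ≠ gc lam (uu lam n)
      · left
        refine Set.mem_biUnion (⟨?_, hne⟩ : uu lam n ∈ {ζ | ζ ∈ T lam ∧ hcol ζ ≠ gc lam ζ}) ?_
        · rw [hTlam]; exact ⟨n, rfl⟩
        · exact ⟨hξS, idx_lt _ hξγ⟩
      · right
        push_neg at hne
        have hμlam : uu lam n < lam := idx_lt_of _ hξγ lam hξα
        have hμ1 : uu lam n + 1 < lam := by
          rw [Ordinal.add_one_eq_succ]; exact hlaml.succ_lt hμlam
        obtain ⟨m₀, hm₀⟩ := hcof _ (dmono hμ1)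
        have hfin : {m : ℕ | uu lam m = uu lam n}.Finite := by
          apply (finite_index_lt hsm ⟨m₀, hm₀.le⟩).subset
          intro m hm
          show en lam m < d (uu lam n + 1)
          rw [← hm]
          exact idx_lt _ (henγ m)
        have hnle : n ≤ sSup {m : ℕ | uu lam m = uu lam n} :=
          le_csSup hfin.bddAbove rfl
        have hnk : n ≤ k := by
          have h1 : hcol (uu lam n) ≤ F (en lam n) := by
            rw [hF]; dsimp only
            exact le_max_right _ _
          rw [hξF] at h1
          calc n ≤ gc lam (uu lam n) := by rw [hgc]; exact hnle
          _ = hcol (uu lam n) := hne.symm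
          _ ≤ k := h1
        exact ⟨n, hnk, rfl⟩
    apply Set.Finite.subset _ hsub
    apply Set.Finite.union
    · apply Set.Finite.biUnion hEx
      intro ζ hζ
      have hζlam : ζ < lam := by
        have hζT : ζ ∈ T lam := hζ.1
        rw [hTlam] at hζT
        obtain ⟨m, rfl⟩ := hζT
        exact idx_lt_of _ (henγ m) lam (hb m)
      have hζ1 : ζ + 1 < lam := by
        rw [Ordinal.add_one_eq_succ]; exact hlaml.succ_lt hζlam
      exact ladder_inter_finite (hS _ hαγ hαl hαc) (dmono hζ1)
    · exact (Set.finite_Iic k).image _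
  -- assembling
  refine ⟨F, fun α hαγ hαl hαc => ?_⟩
  have hj1 : α < d (idx α + 1) := idx_lt α hαγ
  have hj2 : d (idx α) ≤ α := idx_le α hαγ
  have hjΛ : idx α < Λ := idx_ltΛ α hαγ
  rcases lt_or_eq_of_le hj2 with hlt | heq
  · exact caseA α hαγ hαl hαc (idx α) hjΛ hlt hj1.le
  · rcases Ordinal.zero_or_succ_or_isSuccLimit (idx α) with h0 | ⟨ν, hν⟩ | hjl
    · exfalso
      have : d 0 = 0 := by rw [d_eq]; exact Ordinal.bsup_zero _
      rw [h0, this] at heq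
      exact hαl.pos.ne heq
    · apply caseA α hαγ hαl hαc ν (lt_of_lt_of_le (by rw [← hν]; exact Order.lt_succ ν) hjΛ.le) ?_ ?_
      · calc d ν < d (idx α) := dmono (by rw [← hν]; exact Order.lt_succ ν)
        _ = α := heq
      · rw [Ordinal.add_one_eq_succ, hν, heq]
    · exact caseB α hαγ hαl hαc (idx α) hjl hjΛ heq.symm

end St14

namespace St14

theorem key (hU : LadderUniformization.{u}) :
    ∀ γ : Ordinal.{u}, γ < (Cardinal.aleph 2).ord →
    ∀ S : Ordinal.{u} → Set Ordinal.{u},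
      (∀ α < γ, Order.IsSuccLimit α → Ordinal.cof α = Cardinal.aleph0 → IsLadderAt α (S α)) →
      ∃ F : Ordinal.{u} → ℕ, ∀ α < γ, Order.IsSuccLimit α →
        Ordinal.cof α = Cardinal.aleph0 → FinLevel F (S α) := by
  intro γ
  induction γ using Ordinal.induction with
  | _ γ IH =>
    intro hγ S hS
    rcases Ordinal.zero_or_succ_or_isSuccLimit γ with rfl | ⟨β, rfl⟩ | hlim
    · exact ⟨fun _ => 0, fun α hα => absurd hα (not_lt_of_ge (zero_le (a := α)))⟩
    · have hβγ : β < Order.succ β := Order.lt_succ β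
      have hβ2 : β < (Cardinal.aleph 2).ord := hβγ.trans hγ
      obtain ⟨F₀, hF₀⟩ := IH β hβγ hβ2 S (fun α hα h1 h2 => hS α (hα.trans hβγ) h1 h2)
      by_cases hβ : Order.IsSuccLimit β ∧ β.cof = Cardinal.aleph0
      · obtain ⟨F', hle, hFl⟩ := exists_bump (hS β hβγ hβ.1 hβ.2) F₀
        refine ⟨F', fun α hα h1 h2 => ?_⟩
        rcases (Order.lt_succ_iff.1 hα).lt_or_eq with h | rfl
        · exact finLevel_of_le (fun ξ _ => hle ξ) (hF₀ α h h1 h2)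
        · exact hFl
      · refine ⟨F₀, fun α hα h1 h2 => ?_⟩
        rcases (Order.lt_succ_iff.1 hα).lt_or_eq with hl | rfl
        · exact hF₀ α hl h1 h2
        · exact absurd ⟨h1, h2⟩ hβ
    · exact limit_case hU γ hγ hlim S hS
        (fun δ hδ => IH δ hδ (hδ.trans hγ) S (fun α hα h1 h2 => hS α (hα.trans hδ) h1 h2))

end St14

/-- assuming ladder system uniformization on `ω₁`, for every `γ < ω₂` and
every assignment of ladders `S_α` to the limit ordinals `α < γ` of cofinality `ω`, there is
`F : γ → ω` which is finite-to-one on every such `S_α`. -/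
theorem statement14 (hU : LadderUniformization.{u})
    (γ : Ordinal.{u}) (hγ : γ < (Cardinal.aleph 2).ord)
    (S : Ordinal.{u} → Set Ordinal.{u})
    (hS : ∀ α : Ordinal.{u}, α < γ → Order.IsSuccLimit α →
      Ordinal.cof α = Cardinal.aleph0 → IsLadderAt α (S α)) :
    ∃ F : Ordinal.{u} → ℕ,
      ∀ α : Ordinal.{u}, α < γ → Order.IsSuccLimit α → Ordinal.cof α = Cardinal.aleph0 →
        ∀ k : ℕ, {ξ : Ordinal.{u} | ξ ∈ S α ∧ F ξ = k}.Finite := by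
  obtain ⟨F, hF⟩ := St14.key hU γ hγ S hS
  exact ⟨F, fun α h1 h2 h3 k => hF α h1 h2 h3 k⟩
end
end

section
/- Let ⟨S_α : α ∈ E⟩, E = {α < ω₂ : cf(α) = ω}, be a ladder system (each S_α ⊆ α of order type ω with sup S_α = α), and consider the ladder topology on ω₂ + 1. Let γ < ω₂ and suppose F : γ → ω is finite-to-one on S_α for every α ∈ E with α ≤ γ. Then there is a Gδ set in the ladder topology containing ω₂ and disjoint from {ξ : ξ < γ}; in particular ω₂ does not belong to the closure of {ξ : ξ < γ} in the Gδ-modification. -/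
open Set Filter Topology

universe u v

noncomputable section

/-- given a ladder system on `E = {α < ω₂ : cf α = ω}`, `γ < ω₂`, and
`F : γ → ω` finite-to-one on `S_α` for every `α ∈ E` with `α ≤ γ`, there is a Gδ set in the
ladder topology containing the point `ω₂` and disjoint from `γ`; in particular `ω₂` is not
in the Gδ-closure of the set of points below `γ`. -/
theorem statement15 (S : Ordinal.{u} → Set Ordinal.{u})
    (hS : ∀ α ∈ Etwo.{u}, IsLadderAt α (S α))
    (γ : Ordinal.{u}) (hγ : γ < (Cardinal.aleph 2).ord)
    (F : Ordinal.{u} → ℕ)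
    (hF : ∀ α ∈ Etwo.{u}, α ≤ γ →
      ∀ k : ℕ, {ξ : Ordinal.{u} | ξ ∈ S α ∧ F ξ = k}.Finite) :
    (∃ G : Set {β : Ordinal.{u} // β ≤ (Cardinal.aleph 2).ord},
      @IsGδ _ (ladderTop (Cardinal.aleph 2).ord Etwo.{u} S) G ∧
      (⟨(Cardinal.aleph 2).ord, le_rfl⟩ :
        {β : Ordinal.{u} // β ≤ (Cardinal.aleph 2).ord}) ∈ G ∧
      ∀ x ∈ G, ¬ x.1 < γ) ∧
    (⟨(Cardinal.aleph 2).ord, le_rfl⟩ :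
        {β : Ordinal.{u} // β ≤ (Cardinal.aleph 2).ord}) ∉
      @closure _ (gdeltaMod (ladderTop (Cardinal.aleph 2).ord Etwo.{u} S))
        {x : {β : Ordinal.{u} // β ≤ (Cardinal.aleph 2).ord} | x.1 < γ} := by

  classical
  set o : Ordinal.{u} := (Cardinal.aleph 2).ord with ho
  -- the finite sets to remove at stage k
  set Fk : ℕ → Ordinal.{u} → Set Ordinal.{u} :=
    fun k α => {ξ | ξ ∈ S α ∧ ξ < γ ∧ F ξ ≤ k} with hFk
  have hFkfin : ∀ k, ∀ α ∈ Etwo.{u}, (Fk k α).Finite := by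
    intro k α hα
    by_cases hle : α ≤ γ
    · have : Fk k α ⊆ ⋃ j ∈ Finset.range (k+1), {ξ : Ordinal.{u} | ξ ∈ S α ∧ F ξ = j} := by
        intro ξ hξ
        simp only [Set.mem_iUnion]
        exact ⟨F ξ, by simp [Finset.mem_range, Nat.lt_succ_iff, hξ.2.2], hξ.1, rfl⟩
      exact Set.Finite.subset (Set.Finite.biUnion (Finset.finite_toSet _)
        (fun j _ => hF α hα hle j)) this
    · push_neg at hle
      obtain ⟨f, hmono, hrange, hlt, hcof⟩ := hS α hα
      obtain ⟨n, hn⟩ := hcof γ hle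
      have : Fk k α ⊆ f '' {m | m < n} := by
        intro ξ hξ
        have : ξ ∈ Set.range f := hrange ▸ hξ.1
        obtain ⟨m, rfl⟩ := this
        refine ⟨m, ?_, rfl⟩
        by_contra hmn
        simp only [Set.mem_setOf_eq, not_lt] at hmn
        exact absurd (lt_trans hξ.2.1 hn) (not_lt.2 (hmono.monotone hmn))
      exact Set.Finite.subset ((Set.finite_Iio n).image f) this
  set U : ℕ → Set {β : Ordinal.{u} // β ≤ o} :=
    fun k => ladderBase o Etwo.{u} S (Fk k) with hU
  have hUopen : ∀ k, @IsOpen _ (ladderTop o Etwo.{u} S) (U k) := by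
    intro k
    intro _
    refine Filter.mem_iInf_of_mem (Fk k) ?_
    exact Filter.mem_iInf_of_mem (hFkfin k) (Filter.mem_principal_self _)
  have htopU : ∀ k, (⟨o, le_rfl⟩ : {β : Ordinal.{u} // β ≤ o}) ∈ U k := fun k => Or.inl rfl
  set G : Set {β : Ordinal.{u} // β ≤ o} := ⋂ k : ℕ, U k with hG
  have hGδ : @IsGδ _ (ladderTop o Etwo.{u} S) G := by
    letI := ladderTop o Etwo.{u} S
    exact IsGδ.iInter_of_isOpen hUopen
  have hGtop : (⟨o, le_rfl⟩ : {β : Ordinal.{u} // β ≤ o}) ∈ G :=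
    Set.mem_iInter.2 htopU
  have hGdisj : ∀ x ∈ G, ¬ x.1 < γ := by
    intro x hx hxγ
    have hxo : x.1 ≠ o := ne_of_lt (lt_of_lt_of_le hxγ (le_of_lt hγ))
    have hk := Set.mem_iInter.1 hx (F x.1)
    rcases hk with h | ⟨α, hα, hxS, hxF⟩
    · exact hxo h
    · exact hxF ⟨hxS, hxγ, le_rfl⟩
  refine ⟨⟨G, hGδ, hGtop, hGdisj⟩, ?_⟩
  intro hcl
  have hGopen : @IsOpen _ (gdeltaMod (ladderTop o Etwo.{u} S)) G :=
    TopologicalSpace.GenerateOpen.basic G hGδ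
  letI := gdeltaMod (ladderTop o Etwo.{u} S)
  obtain ⟨y, hyG, hyγ⟩ := mem_closure_iff.1 hcl G hGopen hGtop
  exact hGdisj y hyG hyγ
end
end
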